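/- arXiv:1207.3682 — 10 statements merged into one kernel-verified Lean document; each statement's English description precedes it below -/
import Mathlib

section
/- In the matching game with one man m and two women w1, w2, where Π(m,w_i|m)=0, Π(m,w_i|w_i)=ε, Π(m,w_1|w_2)=Π(m,w_2|w_1)=-Δ with Δ>ε>0, every one of the four possible matchings admits a blocking coalition under neutral reasoning; hence the neutral setwise stable set is empty. -/
open Finset

section Defs

variable {M W : Type*} [DecidableEq M] [DecidableEq W]

/-- Utility of agent `z` in matching `A` (additive externalities). -/
def utility (P : M × W → M ⊕ W → ℝ) (A : Finset (M × W)) (z : M ⊕ W) : ℝ :=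
  ∑ e ∈ A, P e z

/-- Agent `z` is an endpoint of the match `e`. -/
def incident (z : M ⊕ W) (e : M × W) : Prop :=
  z = Sum.inl e.1 ∨ z = Sum.inr e.2

/-- `A'` is a valid deviation from `A` by coalition `B`: matches entirely outside `B`
are unchanged, new matches are within `B`, and every member of `B` severs or forms
at least one match. -/
def Deviation (A A' : Finset (M × W)) (B : Finset (M ⊕ W)) : Prop :=
  (∀ e : M × W, Sum.inl e.1 ∉ B → Sum.inr e.2 ∉ B → (e ∈ A' ↔ e ∈ A)) ∧
  (∀ e ∈ A', e ∉ A → Sum.inl e.1 ∈ B ∧ Sum.inr e.2 ∈ B) ∧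
  (∀ z ∈ B, ∃ e ∈ (A' \ A) ∪ (A \ A'), incident z e)

/-- Coalition `B` blocks `A` under neutral reasoning. -/
def NeutralBlocks (P : M × W → M ⊕ W → ℝ) (A : Finset (M × W)) (B : Finset (M ⊕ W)) : Prop :=
  ∃ A', Deviation A A' B ∧
    (∀ z ∈ B, utility P A z ≤ utility P A' z) ∧
    (∃ z ∈ B, utility P A z < utility P A' z)

/-- Membership in the neutral setwise stable set. -/
def NeutralStable (P : M × W → M ⊕ W → ℝ) (A : Finset (M × W)) : Prop :=
  ¬ ∃ B, NeutralBlocks P A B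

/-- `A''` is a possible reaction of the agents outside `B` to the deviation `A'`:
only matches with at least one endpoint outside `B` may be changed. -/
def Reaction (A' : Finset (M × W)) (B : Finset (M ⊕ W)) (A'' : Finset (M × W)) : Prop :=
  ∀ e : M × W, Sum.inl e.1 ∈ B → Sum.inr e.2 ∈ B → (e ∈ A'' ↔ e ∈ A')

/-- Coalition `B` blocks `A` under optimistic reasoning: each member evaluates the
deviation assuming the best possible reaction for itself. -/
def OptBlocks (P : M × W → M ⊕ W → ℝ) (A : Finset (M × W)) (B : Finset (M ⊕ W)) : Prop :=
  ∃ A', Deviation A A' B ∧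
    (∀ z ∈ B, ∃ A'', Reaction A' B A'' ∧ utility P A z ≤ utility P A'' z) ∧
    (∃ z ∈ B, ∃ A'', Reaction A' B A'' ∧ utility P A z < utility P A'' z)

/-- Membership in the optimistic setwise stable set. -/
def OptStable (P : M × W → M ⊕ W → ℝ) (A : Finset (M × W)) : Prop :=
  ¬ ∃ B, OptBlocks P A B

/-- Coalition `B` blocks `A` under pessimistic reasoning: each member evaluates the
deviation assuming the worst possible reaction for itself. -/
def PessBlocks (P : M × W → M ⊕ W → ℝ) (A : Finset (M × W)) (B : Finset (M ⊕ W)) : Prop :=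
  ∃ A', Deviation A A' B ∧
    (∀ z ∈ B, ∀ A'', Reaction A' B A'' → utility P A z ≤ utility P A'' z) ∧
    (∃ z ∈ B, ∀ A'', Reaction A' B A'' → utility P A z < utility P A'' z)

/-- Membership in the pessimistic setwise stable set. -/
def PessStable (P : M × W → M ⊕ W → ℝ) (A : Finset (M × W)) : Prop :=
  ¬ ∃ B, PessBlocks P A B

/-- `A` is a one-to-one matching: no agent is an endpoint of two distinct matches. -/
def OneToOne (A : Finset (M × W)) : Prop :=
  ∀ e ∈ A, ∀ f ∈ A, (e.1 = f.1 ∨ e.2 = f.2) → e = f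

end Defs

/-- Example 1: with one man and two women, ε < Δ, every matching admits a blocking
coalition under neutral reasoning, so the neutral setwise stable set is empty. -/
theorem stmt0 (ε Δ : ℝ) (hε : 0 < ε) (hΔ : ε < Δ)
    (P : Unit × Bool → Unit ⊕ Bool → ℝ)
    (hm : ∀ w : Bool, P ((), w) (Sum.inl ()) = 0)
    (hw : ∀ w : Bool, P ((), w) (Sum.inr w) = ε)
    (hx : ∀ w : Bool, P ((), w) (Sum.inr (!w)) = -Δ) :
    ∀ A : Finset (Unit × Bool), ∃ B, NeutralBlocks P A B := by
  have hcase : ∀ A : Finset (Unit × Bool),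
      A = ∅ ∨ A = {((), false)} ∨ A = {((), true)} ∨ A = {((), false), ((), true)} := by
    decide
  have hutil : ∀ z, utility P {((), false), ((), true)} z
      = P ((), false) z + P ((), true) z := by
    intro z
    simp [utility]
  have hxf : P ((), false) (Sum.inr true) = -Δ := by simpa using hx false
  have hxt : P ((), true) (Sum.inr false) = -Δ := by simpa using hx true
  intro A
  rcases hcase A with h | h | h | h <;> subst h
  · -- A = ∅ : coalition {m, w_false} forms the match ((), false)
    refine ⟨{Sum.inl (), Sum.inr false}, {((), false)}, ⟨?_, ?_, ?_⟩, ?_, ?_⟩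
    · rintro ⟨u, b⟩ h1 h2; simp at h1
    · intro e he _
      simp only [Finset.mem_singleton] at he
      subst he; simp
    · intro z hz
      refine ⟨((), false), by simp, ?_⟩
      fin_cases hz
      · exact Or.inl rfl
      · exact Or.inr rfl
    · intro z hz
      fin_cases hz
      · simp [utility, hm]
      · simp [utility, hw]; positivity
    · exact ⟨Sum.inr false, by simp, by simp [utility, hw]; positivity⟩
  · -- A = {((),false)} : coalition {m, w_true} switches to ((), true)
    refine ⟨{Sum.inl (), Sum.inr true}, {((), true)}, ⟨?_, ?_, ?_⟩, ?_, ?_⟩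
    · rintro ⟨u, b⟩ h1 h2; simp at h1
    · intro e he _
      simp only [Finset.mem_singleton] at he
      subst he; simp
    · intro z hz
      refine ⟨((), true), ?_, ?_⟩
      · simp
      · fin_cases hz
        · exact Or.inl rfl
        · exact Or.inr rfl
    · intro z hz
      fin_cases hz
      · simp [utility, hm]
      · simp [utility, hw, hxf]; linarith
    · exact ⟨Sum.inr true, by simp, by simp [utility, hw, hxf]; linarith⟩
  · -- A = {((),true)} : coalition {m, w_false} switches to ((), false)
    refine ⟨{Sum.inl (), Sum.inr false}, {((), false)}, ⟨?_, ?_, ?_⟩, ?_, ?_⟩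
    · rintro ⟨u, b⟩ h1 h2; simp at h1
    · intro e he _
      simp only [Finset.mem_singleton] at he
      subst he; simp
    · intro z hz
      refine ⟨((), false), ?_, ?_⟩
      · simp
      · fin_cases hz
        · exact Or.inl rfl
        · exact Or.inr rfl
    · intro z hz
      fin_cases hz
      · simp [utility, hm]
      · simp [utility, hw, hxt]; linarith
    · exact ⟨Sum.inr false, by simp, by simp [utility, hw, hxt]; linarith⟩
  · -- A = both matches : coalition {m, w_true} severs everything
    refine ⟨{Sum.inl (), Sum.inr true}, ∅, ⟨?_, ?_, ?_⟩, ?_, ?_⟩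
    · rintro ⟨u, b⟩ h1 h2; simp at h1
    · intro e he; simp at he
    · intro z hz
      fin_cases hz
      · exact ⟨((), false), by simp, Or.inl rfl⟩
      · exact ⟨((), true), by simp, Or.inr rfl⟩
    · intro z hz
      fin_cases hz
      · simp [utility, hutil, hm]
      · simp [utility, hutil, hw, hxf]; linarith
    · exact ⟨Sum.inr true, by simp, by simp [utility, hutil, hw, hxf]; linarith⟩
end

section
/- In the matching game where Π(m,w|m)=Π(m,w|w)=-ε<0 for every match (m,w), and Π(m,w|z)=δ>0 for every z∉{m,w}, if ε is sufficiently large relative to δ (e.g., ε > δ·|M|·|W|), then the empty matching is the unique matching in the neutral setwise stable set. -/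
open Finset

/-- If every match costs its endpoints ε and benefits everyone else δ, with
ε > δ·|M|·|W|, then the empty matching is the unique neutral setwise stable matching. -/
theorem stmt1 {M W : Type*} [Fintype M] [Fintype W] [DecidableEq M] [DecidableEq W]
    [Nonempty M] [Nonempty W]
    (P : M × W → M ⊕ W → ℝ) (ε δ : ℝ) (hε : 0 < ε) (hδ : 0 < δ)
    (hend : ∀ e : M × W, P e (Sum.inl e.1) = -ε ∧ P e (Sum.inr e.2) = -ε)
    (hext : ∀ e : M × W, ∀ z : M ⊕ W, z ≠ Sum.inl e.1 → z ≠ Sum.inr e.2 → P e z = δ)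
    (hbig : δ * (Fintype.card M) * (Fintype.card W) < ε) :
    NeutralStable P (∅ : Finset (M × W)) ∧
      ∀ A : Finset (M × W), NeutralStable P A → A = ∅ := by

  have key : ∀ (S : Finset (M × W)) (e₀ : M × W), e₀ ∈ S → ∀ z : M ⊕ W, P e₀ z = -ε →
      ∑ e ∈ S, P e z < 0 := by
    intro S e₀ he₀ z hz
    have hle : ∀ e ∈ S.erase e₀, P e z ≤ δ := by
      intro e _
      by_cases h1 : z = Sum.inl e.1
      · rw [h1, (hend e).1]; linarith
      by_cases h2 : z = Sum.inr e.2
      · rw [h2, (hend e).2]; linarith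
      · rw [hext e z h1 h2]
    have hsum : ∑ e ∈ S.erase e₀, P e z ≤ (S.erase e₀).card • δ :=
      Finset.sum_le_card_nsmul _ _ _ hle
    have hc : (S.erase e₀).card + 1 ≤ Fintype.card M * Fintype.card W := by
      have h3 := Finset.card_erase_lt_of_mem he₀
      have h4 := Finset.card_le_univ S
      rw [Fintype.card_prod] at h4
      omega
    have hcR : ((S.erase e₀).card : ℝ) + 1 ≤ (Fintype.card M : ℝ) * (Fintype.card W) := by
      exact_mod_cast hc
    rw [← Finset.add_sum_erase _ _ he₀, hz]
    rw [nsmul_eq_mul] at hsum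
    nlinarith [mul_le_mul_of_nonneg_right hcR hδ.le, hbig, hδ]
  constructor
  · rintro ⟨B, A', hdev, hweak, z₀, hz₀, _⟩
    obtain ⟨e, he, _⟩ := hdev.2.2 z₀ hz₀
    simp only [Finset.sdiff_empty, Finset.empty_sdiff, Finset.union_empty] at he
    have hB := hdev.2.1 e he (Finset.notMem_empty e)
    have h1 := hweak _ hB.1
    have hneg := key A' e he (Sum.inl e.1) (hend e).1
    simp only [utility, Finset.sum_empty] at h1
    linarith
  · intro A hA
    by_contra hne
    obtain ⟨e₀, he₀⟩ := Finset.nonempty_iff_ne_empty.mpr hne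
    apply hA
    have hkey : ∀ z : M ⊕ W, P e₀ z = -ε →
        utility P A z < utility P (A.filter (fun e => ¬(e.1 = e₀.1 ∨ e.2 = e₀.2))) z := by
      intro z hz
      have hsplit := Finset.sum_filter_add_sum_filter_not A
        (fun e => e.1 = e₀.1 ∨ e.2 = e₀.2) (fun e => P e z)
      have hR : e₀ ∈ A.filter (fun e => e.1 = e₀.1 ∨ e.2 = e₀.2) := by
        simp [he₀]
      have hneg := key _ e₀ hR z hz
      simp only [utility]
      linarith
    refine ⟨{Sum.inl e₀.1, Sum.inr e₀.2},
      A.filter (fun e => ¬(e.1 = e₀.1 ∨ e.2 = e₀.2)), ⟨?_, ?_, ?_⟩, ?_, ?_⟩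
    · intro e hnl hnr
      simp only [Finset.mem_insert, Finset.mem_singleton, not_or] at hnl hnr
      have h1 : ¬ e.1 = e₀.1 := fun h => hnl.1 (by rw [h])
      have h2 : ¬ e.2 = e₀.2 := fun h => hnr.2 (by rw [h])
      simp [Finset.mem_filter, h1, h2]
    · intro e he' heA
      exact absurd (Finset.mem_of_mem_filter e he') heA
    · intro z hz
      refine ⟨e₀, Finset.mem_union_right _ ?_, ?_⟩
      · simp [Finset.mem_sdiff, he₀, Finset.mem_filter]
      · simp only [Finset.mem_insert, Finset.mem_singleton] at hz
        unfold incident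
        tauto
    · intro z hz
      simp only [Finset.mem_insert, Finset.mem_singleton] at hz
      rcases hz with h | h <;> subst h
      · exact (hkey _ (hend e₀).1).le
      · exact (hkey _ (hend e₀).2).le
    · exact ⟨Sum.inl e₀.1, by simp, hkey _ (hend e₀).1⟩
end

section
/- In the matching game where Π(m,w|m)=Π(m,w|w)=-ε<0 for every match (m,w) and Π(m,w|z)=δ>0 for z∉{m,w}, with |M|,|W|≥2, if δ is sufficiently large relative to ε (e.g., δ·(min(|M|,|W|)-1) > ε), then the empty matching is blocked by the grand coalition via the complete matching under neutral reasoning, and the neutral setwise stable set is empty. -/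
open Finset

/-- If every match costs its endpoints ε and benefits everyone else δ, with |M|,|W| ≥ 2
and δ·(min(|M|,|W|)-1) > ε, then the empty matching is blocked by the grand coalition
via the complete matching under neutral reasoning, and the neutral setwise stable set
is empty. -/
theorem stmt2 {M W : Type*} [Fintype M] [Fintype W] [DecidableEq M] [DecidableEq W]
    (P : M × W → M ⊕ W → ℝ) (ε δ : ℝ) (hε : 0 < ε) (hδ : 0 < δ)
    (hend : ∀ e : M × W, P e (Sum.inl e.1) = -ε ∧ P e (Sum.inr e.2) = -ε)
    (hext : ∀ e : M × W, ∀ z : M ⊕ W, z ≠ Sum.inl e.1 → z ≠ Sum.inr e.2 → P e z = δ)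
    (hM : 2 ≤ Fintype.card M) (hW : 2 ≤ Fintype.card W)
    (hbig : ε < δ * ((min (Fintype.card M) (Fintype.card W) : ℝ) - 1)) :
    (Deviation (∅ : Finset (M × W)) Finset.univ (Finset.univ : Finset (M ⊕ W)) ∧
      (∀ z ∈ (Finset.univ : Finset (M ⊕ W)),
        utility P (∅ : Finset (M × W)) z ≤ utility P Finset.univ z) ∧
      (∃ z ∈ (Finset.univ : Finset (M ⊕ W)),
        utility P (∅ : Finset (M × W)) z < utility P Finset.univ z)) ∧
    ∀ A : Finset (M × W), ¬ NeutralStable P A := by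
  have hM1 : (1 : ℕ) ≤ Fintype.card M := le_trans (by norm_num) hM
  have hW1 : (1 : ℕ) ≤ Fintype.card W := le_trans (by norm_num) hW
  have hMne : Nonempty M := Fintype.card_pos_iff.mp (lt_of_lt_of_le (by norm_num) hM)
  have hWne : Nonempty W := Fintype.card_pos_iff.mp (lt_of_lt_of_le (by norm_num) hW)
  have hminM : min ((Fintype.card M : ℝ)) ((Fintype.card W : ℝ)) ≤ (Fintype.card M : ℝ) :=
    min_le_left _ _
  have hminW : min ((Fintype.card M : ℝ)) ((Fintype.card W : ℝ)) ≤ (Fintype.card W : ℝ) :=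
    min_le_right _ _
  have hcM : (2 : ℝ) ≤ (Fintype.card M : ℝ) := by exact_mod_cast hM
  have hcW : (2 : ℝ) ≤ (Fintype.card W : ℝ) := by exact_mod_cast hW
  -- utility of complete matching is positive for every agent
  have key : ∀ z : M ⊕ W, 0 < utility P (Finset.univ : Finset (M × W)) z := by
    intro z
    cases z with
    | inl m =>
      have hval : utility P (Finset.univ : Finset (M × W)) (Sum.inl m)
          = (Fintype.card W : ℝ) * (-ε)
            + ((Fintype.card M : ℝ) - 1) * ((Fintype.card W : ℝ) * δ) := by
        unfold utility
        rw [show (∑ e ∈ (Finset.univ : Finset (M × W)), P e (Sum.inl m))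
            = ∑ a : M, ∑ b : W, P (a, b) (Sum.inl m) from Fintype.sum_prod_type _]
        have inner : ∀ a : M, (∑ b : W, P (a, b) (Sum.inl m))
            = if a = m then (Fintype.card W : ℝ) * (-ε) else (Fintype.card W : ℝ) * δ := by
          intro a
          by_cases ha : a = m
          · subst ha
            rw [if_pos rfl, Finset.sum_congr rfl (fun b _ => (hend (a, b)).1)]
            simp [mul_comm]
          · rw [if_neg ha, Finset.sum_congr rfl
              (fun b _ => hext (a, b) (Sum.inl m)
                (by simp [Ne.symm ha]) (by simp))]
            simp [mul_comm]
        rw [Finset.sum_congr rfl (fun a _ => inner a),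
          ← Finset.add_sum_erase Finset.univ _ (Finset.mem_univ m), if_pos rfl]
        rw [Finset.sum_congr rfl
          (fun a ha => if_neg (Finset.ne_of_mem_erase ha))]
        rw [Finset.sum_const, Finset.card_erase_of_mem (Finset.mem_univ m),
          Finset.card_univ, nsmul_eq_mul, Nat.cast_sub hM1]
        push_cast
        ring
      rw [hval]
      have hεM : ε < δ * ((Fintype.card M : ℝ) - 1) := by
        nlinarith [mul_le_mul_of_nonneg_left hminM (le_of_lt hδ)]
      nlinarith [mul_pos (lt_of_lt_of_le (by norm_num : (0:ℝ) < 2) hcW) (sub_pos.mpr hεM)]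
    | inr w =>
      have hval : utility P (Finset.univ : Finset (M × W)) (Sum.inr w)
          = (Fintype.card M : ℝ) * (-ε)
            + ((Fintype.card W : ℝ) - 1) * ((Fintype.card M : ℝ) * δ) := by
        unfold utility
        rw [show (∑ e ∈ (Finset.univ : Finset (M × W)), P e (Sum.inr w))
            = ∑ a : M, ∑ b : W, P (a, b) (Sum.inr w) from Fintype.sum_prod_type _]
        rw [Finset.sum_comm]
        have inner : ∀ b : W, (∑ a : M, P (a, b) (Sum.inr w))
            = if b = w then (Fintype.card M : ℝ) * (-ε) else (Fintype.card M : ℝ) * δ := by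
          intro b
          by_cases hb : b = w
          · subst hb
            rw [if_pos rfl, Finset.sum_congr rfl (fun a _ => (hend (a, b)).2)]
            simp [mul_comm]
          · rw [if_neg hb, Finset.sum_congr rfl
              (fun a _ => hext (a, b) (Sum.inr w)
                (by simp) (by simp [Ne.symm hb]))]
            simp [mul_comm]
        rw [Finset.sum_congr rfl (fun b _ => inner b),
          ← Finset.add_sum_erase Finset.univ _ (Finset.mem_univ w), if_pos rfl]
        rw [Finset.sum_congr rfl
          (fun b hb => if_neg (Finset.ne_of_mem_erase hb))]
        rw [Finset.sum_const, Finset.card_erase_of_mem (Finset.mem_univ w),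
          Finset.card_univ, nsmul_eq_mul, Nat.cast_sub hW1]
        push_cast
        ring
      rw [hval]
      have hεW : ε < δ * ((Fintype.card W : ℝ) - 1) := by
        nlinarith [mul_le_mul_of_nonneg_left hminW (le_of_lt hδ)]
      nlinarith [mul_pos (lt_of_lt_of_le (by norm_num : (0:ℝ) < 2) hcM) (sub_pos.mpr hεW)]
  have hutil0 : ∀ z : M ⊕ W, utility P (∅ : Finset (M × W)) z = 0 := by
    intro z; simp [utility]
  -- Part 1: the grand-coalition deviation from ∅ to univ
  have part1 : (Deviation (∅ : Finset (M × W)) Finset.univ (Finset.univ : Finset (M ⊕ W)) ∧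
      (∀ z ∈ (Finset.univ : Finset (M ⊕ W)),
        utility P (∅ : Finset (M × W)) z ≤ utility P Finset.univ z) ∧
      (∃ z ∈ (Finset.univ : Finset (M ⊕ W)),
        utility P (∅ : Finset (M × W)) z < utility P Finset.univ z)) := by
    refine ⟨⟨?_, ?_, ?_⟩, ?_, ?_⟩
    · intro e he _; exact absurd (Finset.mem_univ _) he
    · intro e _ _; exact ⟨Finset.mem_univ _, Finset.mem_univ _⟩
    · intro z _
      cases z with
      | inl m =>
        obtain ⟨w⟩ := hWne
        exact ⟨(m, w), by simp, Or.inl rfl⟩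
      | inr w =>
        obtain ⟨m⟩ := hMne
        exact ⟨(m, w), by simp, Or.inr rfl⟩
    · intro z _
      rw [hutil0 z]
      exact le_of_lt (key z)
    · obtain ⟨m⟩ := hMne
      exact ⟨Sum.inl m, Finset.mem_univ _, by rw [hutil0]; exact key _⟩
  refine ⟨part1, ?_⟩
  -- Part 2: no matching is neutrally stable
  intro A hstable
  apply hstable
  rcases A.eq_empty_or_nonempty with rfl | ⟨e, he⟩
  · exact ⟨Finset.univ, Finset.univ, part1.1, part1.2.1, part1.2.2⟩
  · -- the two endpoints of e block by erasing e
    refine ⟨{Sum.inl e.1, Sum.inr e.2}, A.erase e, ⟨?_, ?_, ?_⟩, ?_, ?_⟩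
    · intro f hf1 hf2
      have hfe : f ≠ e := by
        intro h; subst h
        exact hf1 (by simp)
      simp [Finset.mem_erase, hfe]
    · intro f hf hfn
      exact absurd (Finset.mem_of_mem_erase hf) hfn
    · intro z hz
      refine ⟨e, ?_, ?_⟩
      · simp [Finset.mem_union, Finset.mem_sdiff, he, Finset.mem_erase]
      · rcases Finset.mem_insert.mp hz with h | h
        · exact Or.inl h
        · exact Or.inr (Finset.mem_singleton.mp h)
    · intro z hz
      have herase : utility P (A.erase e) z = utility P A z - P e z := by
        unfold utility
        exact Finset.sum_erase_eq_sub he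
      rw [herase]
      rcases Finset.mem_insert.mp hz with h | h
      · subst h; rw [(hend e).1]; linarith
      · rw [Finset.mem_singleton.mp h, (hend e).2]; linarith
    · refine ⟨Sum.inl e.1, by simp, ?_⟩
      have herase : utility P (A.erase e) (Sum.inl e.1)
          = utility P A (Sum.inl e.1) - P e (Sum.inl e.1) := by
        unfold utility
        exact Finset.sum_erase_eq_sub he
      rw [herase, (hend e).1]; linarith
end

section
/- Any matching A in the optimistic setwise stable set of a many-to-many matching game partitions the agents into two sets: agents who are matched in A and obtain their maximum possible utility over all matchings, and agents who are unmatched in A. -/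
open Finset

/-- Any matching in the optimistic setwise stable set partitions the agents into those
that are matched and obtain their maximum possible utility over all matchings, and those
that are unmatched. -/
theorem stmt4 {M W : Type*} [DecidableEq M] [DecidableEq W]
    (P : M × W → M ⊕ W → ℝ) (A : Finset (M × W)) (h : OptStable P A) :
    ∀ z : M ⊕ W,
      (∀ e ∈ A, ¬ incident z e) ∨
      ((∃ e ∈ A, incident z e) ∧
        ∀ A' : Finset (M × W), utility P A' z ≤ utility P A z) := by
  intro z
  by_cases hm : ∃ e ∈ A, incident z e
  · right
    refine ⟨hm, fun A' => ?_⟩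
    by_contra hlt
    push_neg at hlt
    apply h
    obtain ⟨e, heA, hinc⟩ := hm
    have hreact : ∀ A'' : Finset (M × W), Reaction (A.erase e) ({z} : Finset (M ⊕ W)) A'' := by
      intro A'' f hf1 hf2
      rw [Finset.mem_singleton] at hf1 hf2
      rw [← hf2] at hf1
      exact absurd hf1 (by simp)
    refine ⟨{z}, A.erase e, ⟨?_, ?_, ?_⟩, ?_, ?_⟩
    · intro f hf1 hf2
      rw [Finset.mem_singleton] at hf1 hf2
      rw [Finset.mem_erase]
      constructor
      · exact fun hh => hh.2
      · intro hfA
        refine ⟨fun hfe => ?_, hfA⟩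
        subst hfe
        rcases hinc with hh | hh
        · exact hf1 hh.symm
        · exact hf2 hh.symm
    · intro f hf hfn
      exact absurd (Finset.mem_of_mem_erase hf) hfn
    · intro w hw
      rw [Finset.mem_singleton] at hw
      subst hw
      refine ⟨e, ?_, hinc⟩
      exact Finset.mem_union_right _ (Finset.mem_sdiff.2 ⟨heA, Finset.notMem_erase e A⟩)
    · intro w hw
      rw [Finset.mem_singleton] at hw
      subst hw
      exact ⟨A', hreact A', le_of_lt hlt⟩
    · exact ⟨z, Finset.mem_singleton_self z, A', hreact A', hlt⟩
  · left
    push_neg at hm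
    exact hm
end

section
/- Every matching in the optimistic setwise stable set contains every match (m,w) with Π(m,w|m)≥0, Π(m,w|w)≥0, and Π(m,w|m)+Π(m,w|w)>0, and contains no match (m,w) with Π(m,w|m)<0 or Π(m,w|w)<0. -/
open Finset

open Classical in
private lemma filter_sum_ge {α : Type*} (A : Finset α) (g : α → ℝ) :
    ∑ f ∈ A, g f ≤ ∑ f ∈ A.filter (fun f => 0 ≤ g f), g f := by
  classical
  have := Finset.sum_filter_add_sum_filter_not A (fun f => 0 ≤ g f) g
  have h2 : ∑ f ∈ A.filter (fun f => ¬ 0 ≤ g f), g f ≤ 0 :=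
    Finset.sum_nonpos (by intro i hi; simp only [Finset.mem_filter] at hi; linarith [hi.2])
  linarith

open Classical in
private lemma filter_sum_gt {α : Type*} (A : Finset α) (g : α → ℝ) (e : α)
    (he : e ∈ A) (hneg : g e < 0) :
    ∑ f ∈ A, g f < ∑ f ∈ A.filter (fun f => 0 ≤ g f), g f := by
  classical
  have := Finset.sum_filter_add_sum_filter_not A (fun f => 0 ≤ g f) g
  have h2 : ∑ f ∈ A.filter (fun f => ¬ 0 ≤ g f), g f < 0 := by
    apply Finset.sum_neg
    · intro i hi; simp only [Finset.mem_filter] at hi; linarith [hi.2]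
    · exact ⟨e, Finset.mem_filter.2 ⟨he, by linarith⟩⟩
  linarith

/-- Every matching in the optimistic setwise stable set contains every match that is
weakly beneficial for both endpoints and strictly beneficial for their sum, and contains
no match that is strictly harmful to one of its endpoints. -/
theorem stmt5 {M W : Type*} [DecidableEq M] [DecidableEq W]
    (P : M × W → M ⊕ W → ℝ) (A : Finset (M × W)) (h : OptStable P A) :
    (∀ e : M × W, 0 ≤ P e (Sum.inl e.1) → 0 ≤ P e (Sum.inr e.2) →
      0 < P e (Sum.inl e.1) + P e (Sum.inr e.2) → e ∈ A) ∧
    (∀ e : M × W, (P e (Sum.inl e.1) < 0 ∨ P e (Sum.inr e.2) < 0) → e ∉ A) := by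
  classical
  constructor
  · intro e h1 h2 h3
    by_contra heA
    apply h
    refine ⟨{Sum.inl e.1, Sum.inr e.2}, insert e A, ?_, ?_, ?_⟩
    · refine ⟨?_, ?_, ?_⟩
      · intro f hf1 hf2
        have hfe : f ≠ e := by
          intro hfe; subst hfe; exact hf1 (by simp)
        simp [Finset.mem_insert, hfe]
      · intro f hf hfA
        rcases Finset.mem_insert.1 hf with rfl | hfA'
        · simp
        · exact absurd hfA' hfA
      · intro z hz
        refine ⟨e, ?_, ?_⟩
        · apply Finset.mem_union_left
          simp [Finset.mem_sdiff, heA]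
        · rcases Finset.mem_insert.1 hz with rfl | hz'
          · exact Or.inl rfl
          · simp only [Finset.mem_singleton] at hz'
            exact Or.inr hz'
    · intro z hz
      refine ⟨insert e (A.filter (fun f => 0 ≤ P f z)), ?_, ?_⟩
      · intro f hf1 hf2
        have hf1' : f.1 = e.1 := by
          rcases Finset.mem_insert.1 hf1 with h' | h'
          · exact Sum.inl.inj h'
          · simp at h'
        have hf2' : f.2 = e.2 := by
          rcases Finset.mem_insert.1 hf2 with h' | h'
          · simp at h'
          · simpa using h'
        have : f = e := Prod.ext hf1' hf2'
        subst this
        simp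
      · have hez : 0 ≤ P e z := by
          rcases Finset.mem_insert.1 hz with rfl | hz'
          · exact h1
          · simp only [Finset.mem_singleton] at hz'; subst hz'; exact h2
        have heF : e ∉ A.filter (fun f => 0 ≤ P f z) := fun hc => heA (Finset.mem_filter.1 hc).1
        unfold utility
        rw [Finset.sum_insert heF]
        have := filter_sum_ge A (fun f => P f z)
        linarith
    · have hone : 0 < P e (Sum.inl e.1) ∨ 0 < P e (Sum.inr e.2) := by
        by_contra hc
        push_neg at hc
        linarith [hc.1, hc.2]
      obtain ⟨z, hz, hzpos⟩ : ∃ z ∈ ({Sum.inl e.1, Sum.inr e.2} : Finset (M ⊕ W)), 0 < P e z := by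
        rcases hone with h' | h'
        · exact ⟨Sum.inl e.1, by simp, h'⟩
        · exact ⟨Sum.inr e.2, by simp, h'⟩
      refine ⟨z, hz, insert e (A.filter (fun f => 0 ≤ P f z)), ?_, ?_⟩
      · intro f hf1 hf2
        have hf1' : f.1 = e.1 := by
          rcases Finset.mem_insert.1 hf1 with h' | h'
          · exact Sum.inl.inj h'
          · simp at h'
        have hf2' : f.2 = e.2 := by
          rcases Finset.mem_insert.1 hf2 with h' | h'
          · simp at h'
          · simpa using h'
        have : f = e := Prod.ext hf1' hf2'
        subst this
        simp
      · have heF : e ∉ A.filter (fun f => 0 ≤ P f z) := fun hc => heA (Finset.mem_filter.1 hc).1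
        unfold utility
        rw [Finset.sum_insert heF]
        have := filter_sum_ge A (fun f => P f z)
        linarith
  · intro e he heA
    apply h
    obtain ⟨z, hinc, hneg⟩ : ∃ z : M ⊕ W, incident z e ∧ P e z < 0 := by
      rcases he with h' | h'
      · exact ⟨Sum.inl e.1, Or.inl rfl, h'⟩
      · exact ⟨Sum.inr e.2, Or.inr rfl, h'⟩
    refine ⟨{z}, A.erase e, ?_, ?_, ?_⟩
    · refine ⟨?_, ?_, ?_⟩
      · intro f hf1 hf2
        have hfe : f ≠ e := by
          intro hfe; subst hfe
          rcases hinc with h' | h'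
          · exact hf1 (by simp [← h'])
          · exact hf2 (by simp [← h'])
        simp [Finset.mem_erase, hfe]
      · intro f hf hfA
        exact absurd (Finset.mem_erase.1 hf).2 hfA
      · intro z' hz'
        simp only [Finset.mem_singleton] at hz'; subst hz'
        refine ⟨e, ?_, hinc⟩
        apply Finset.mem_union_right
        simp [Finset.mem_sdiff, heA]
    · intro z' hz'
      simp only [Finset.mem_singleton] at hz'; subst hz'
      refine ⟨A.filter (fun f => 0 ≤ P f z'), ?_, ?_⟩
      · intro f hf1 hf2
        exfalso
        simp only [Finset.mem_singleton] at hf1 hf2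
        rcases hinc with h' | h' <;> (rw [h'] at hf1 hf2; simp_all)
      · unfold utility
        exact le_of_lt (filter_sum_gt A (fun f => P f z') e heA hneg)
    · refine ⟨z, by simp, A.filter (fun f => 0 ≤ P f z), ?_, ?_⟩
      · intro f hf1 hf2
        exfalso
        simp only [Finset.mem_singleton] at hf1 hf2
        rcases hinc with h' | h' <;> (rw [h'] at hf1 hf2; simp_all)
      · unfold utility
        exact filter_sum_gt A (fun f => P f z) e heA hneg
end

section
/- In the one-to-one matching game with M={m1,m2}, W={w1,w2}, Π(m_i,w_j|m_i)=Π(m_i,w_j|w_j)=-ε and Π(m_i,w_j|z)=V for z∉{m_i,w_j}, with V≫ε>0 (e.g., V>2ε), the empty matching is neutral pairwise stable, but the neutral setwise stable set is empty. -/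
open Finset

section Pairwise

variable {M W : Type*} [DecidableEq M] [DecidableEq W]

/-- `A` is neutral pairwise stable: no single agent strictly improves by cutting its
matches, and no pair can form their match (cutting their previous matches) with both
weakly improving and one strictly improving, all other matches unchanged. -/
def NeutralPairwiseStable (P : M × W → M ⊕ W → ℝ) (A : Finset (M × W)) : Prop :=
  (∀ z : M ⊕ W,
    utility P (A.filter (fun e => ¬ (z = Sum.inl e.1 ∨ z = Sum.inr e.2))) z ≤ utility P A z) ∧
  (∀ m : M, ∀ w : W, (m, w) ∉ A →
    ¬ (utility P A (Sum.inl m) ≤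
         utility P (insert (m, w) (A.filter (fun e => e.1 ≠ m ∧ e.2 ≠ w))) (Sum.inl m) ∧
       utility P A (Sum.inr w) ≤
         utility P (insert (m, w) (A.filter (fun e => e.1 ≠ m ∧ e.2 ≠ w))) (Sum.inr w) ∧
       (utility P A (Sum.inl m) <
          utility P (insert (m, w) (A.filter (fun e => e.1 ≠ m ∧ e.2 ≠ w))) (Sum.inl m) ∨
        utility P A (Sum.inr w) <
          utility P (insert (m, w) (A.filter (fun e => e.1 ≠ m ∧ e.2 ≠ w))) (Sum.inr w))))

end Pairwise

section OneOne

variable {M W : Type*} [DecidableEq M] [DecidableEq W]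

/-- Coalition `B` blocks the one-to-one matching `A` under neutral reasoning,
via a one-to-one deviation. -/
def NeutralBlocks11 (P : M × W → M ⊕ W → ℝ) (A : Finset (M × W)) (B : Finset (M ⊕ W)) : Prop :=
  ∃ A', OneToOne A' ∧ Deviation A A' B ∧
    (∀ z ∈ B, utility P A z ≤ utility P A' z) ∧
    (∃ z ∈ B, utility P A z < utility P A' z)

/-- Coalition `B` blocks the one-to-one matching `A` under pessimistic reasoning,
via a one-to-one deviation, where reactions are also one-to-one matchings. -/
def PessBlocks11 (P : M × W → M ⊕ W → ℝ) (A : Finset (M × W)) (B : Finset (M ⊕ W)) : Prop :=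
  ∃ A', OneToOne A' ∧ Deviation A A' B ∧
    (∀ z ∈ B, ∀ A'', OneToOne A'' → Reaction A' B A'' → utility P A z ≤ utility P A'' z) ∧
    (∃ z ∈ B, ∀ A'', OneToOne A'' → Reaction A' B A'' → utility P A z < utility P A'' z)

/-- Coalition `B` weakly blocks the one-to-one matching `A` under optimistic reasoning:
every member strictly improves in its optimistic evaluation. -/
def WeakOptBlocks11 (P : M × W → M ⊕ W → ℝ) (A : Finset (M × W)) (B : Finset (M ⊕ W)) : Prop :=
  B.Nonempty ∧
  ∃ A', OneToOne A' ∧ Deviation A A' B ∧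
    ∀ z ∈ B, ∃ A'', OneToOne A'' ∧ Reaction A' B A'' ∧ utility P A z < utility P A'' z

end OneOne

/-- In the 2×2 game where every match costs its endpoints ε and gives V to the other
agents, with V > 2ε > 0, the empty matching is neutral pairwise stable, while the
neutral setwise stable set (among one-to-one matchings) is empty. -/
theorem stmt9 (ε V : ℝ) (hε : 0 < ε) (hV : 2 * ε < V)
    (P : Bool × Bool → Bool ⊕ Bool → ℝ)
    (hend : ∀ e : Bool × Bool, P e (Sum.inl e.1) = -ε ∧ P e (Sum.inr e.2) = -ε)
    (hext : ∀ e : Bool × Bool, ∀ z : Bool ⊕ Bool,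
      z ≠ Sum.inl e.1 → z ≠ Sum.inr e.2 → P e z = V) :
    NeutralPairwiseStable P (∅ : Finset (Bool × Bool)) ∧
      ∀ A : Finset (Bool × Bool), OneToOne A → ∃ B, NeutralBlocks11 P A B := by
  constructor
  · constructor
    · intro z; simp [utility]
    · intro m w _ h
      have h1 := h.1
      have hu0 : utility P (∅ : Finset (Bool × Bool)) (Sum.inl m) = 0 := by simp [utility]
      have hu1 : utility P
          (insert (m, w) ((∅ : Finset (Bool × Bool)).filter (fun e => e.1 ≠ m ∧ e.2 ≠ w)))
          (Sum.inl m) = -ε := by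
        simp [utility, (hend (m, w)).1]
      rw [hu0, hu1] at h1
      linarith
  · intro A hA
    by_cases hne : A.Nonempty
    · obtain ⟨e, he⟩ := hne
      refine ⟨{Sum.inl e.1}, A.erase e, ?_, ⟨?_, ?_, ?_⟩, ?_, ?_⟩
      · intro f hf g hg hfg
        exact hA f (Finset.mem_of_mem_erase hf) g (Finset.mem_of_mem_erase hg) hfg
      · intro f hf1 _
        have hfe : f ≠ e := by
          intro h; subst h; exact hf1 (by simp)
        simp [Finset.mem_erase, hfe]
      · intro f hf hfA
        exact absurd (Finset.mem_of_mem_erase hf) hfA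
      · intro z hz
        simp only [Finset.mem_singleton] at hz
        refine ⟨e, ?_, ?_⟩
        · simp [Finset.mem_union, Finset.mem_sdiff, he]
        · left; rw [hz]
      · intro z hz
        simp only [Finset.mem_singleton] at hz
        subst hz
        have := Finset.sum_erase_add A (fun f => P f (Sum.inl e.1)) he
        have hpe : P e (Sum.inl e.1) = -ε := (hend e).1
        simp only [utility]
        nlinarith [this]
      · refine ⟨Sum.inl e.1, by simp, ?_⟩
        have := Finset.sum_erase_add A (fun f => P f (Sum.inl e.1)) he
        have hpe : P e (Sum.inl e.1) = -ε := (hend e).1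
        simp only [utility]
        nlinarith [this]
    · have hAe : A = ∅ := Finset.not_nonempty_iff_eq_empty.mp hne
      subst hAe
      refine ⟨{Sum.inl false, Sum.inl true, Sum.inr false, Sum.inr true},
        ⟨{(false, false), (true, true)}, ?_, ⟨?_, ?_, ?_⟩, ?_, ?_⟩⟩
      · intro f hf g hg hfg
        fin_cases hf <;> fin_cases hg <;> simp_all
      · intro f h1 _
        exfalso; apply h1
        rcases f.1 with _ | _ <;> simp
      · intro f _ _
        constructor
        · rcases f.1 with _ | _ <;> simp
        · rcases f.2 with _ | _ <;> simp
      · intro z hz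
        simp only [Finset.mem_insert, Finset.mem_singleton] at hz
        rcases hz with h | h | h | h <;> subst h
        · exact ⟨(false, false), by simp [incident]⟩
        · exact ⟨(true, true), by simp [incident]⟩
        · exact ⟨(false, false), by simp [incident]⟩
        · exact ⟨(true, true), by simp [incident]⟩
      · intro z hz
        have hkey : utility P ({(false, false), (true, true)} : Finset (Bool × Bool)) z
            = P (false, false) z + P (true, true) z := by
          simp [utility]
        have h0 : utility P (∅ : Finset (Bool × Bool)) z = 0 := by simp [utility]
        simp only [Finset.mem_insert, Finset.mem_singleton] at hz
        rw [h0, hkey]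
        rcases hz with h | h | h | h <;> subst h
        · rw [(hend (false, false)).1, hext (true, true) _ (by simp) (by simp)]; linarith
        · rw [(hend (true, true)).1, hext (false, false) _ (by simp) (by simp)]; linarith
        · rw [(hend (false, false)).2, hext (true, true) _ (by simp) (by simp)]; linarith
        · rw [(hend (true, true)).2, hext (false, false) _ (by simp) (by simp)]; linarith
      · refine ⟨Sum.inl false, by simp, ?_⟩
        have hkey : utility P ({(false, false), (true, true)} : Finset (Bool × Bool)) (Sum.inl false)
            = P (false, false) (Sum.inl false) + P (true, true) (Sum.inl false) := by
          simp [utility]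
        have h0 : utility P (∅ : Finset (Bool × Bool)) (Sum.inl false) = 0 := by simp [utility]
        rw [h0, hkey, (hend (false, false)).1, hext (true, true) _ (by simp) (by simp)]
        linarith
end

section
/- In one-to-one matching games, a matching is pairwise stable under optimistic reasoning if and only if it belongs to the weak optimistic setwise stable set, where weak stability requires all members of a blocking coalition to strictly improve. -/
open Finset

/-- In one-to-one matching games, a matching is pairwise stable under optimistic
reasoning (no weakly blocking singleton or pair) if and only if it belongs to the weak
optimistic setwise stable set (no weakly blocking coalition of any size). -/
theorem stmt10 {M W : Type*} [DecidableEq M] [DecidableEq W]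
    (P : M × W → M ⊕ W → ℝ) (A : Finset (M × W)) (hA : OneToOne A) :
    (¬ ∃ B, B.card ≤ 2 ∧ WeakOptBlocks11 P A B) ↔ (¬ ∃ B, WeakOptBlocks11 P A B) := by
  classical
  constructor
  · rintro h ⟨B, hBne, A', hA'11, ⟨hd1, hd2, hd3⟩, hmem⟩
    obtain ⟨z, hz⟩ := hBne
    obtain ⟨e, he, hinc⟩ := hd3 z hz
    rcases Finset.mem_union.mp he with hnew | hsev
    · -- Case: z forms a new match e ∈ A' \ A. Use the pair {inl e.1, inr e.2}.
      rw [Finset.mem_sdiff] at hnew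
      obtain ⟨heB1, heB2⟩ := hd2 e hnew.1 hnew.2
      set B₀ : Finset (M ⊕ W) := {Sum.inl e.1, Sum.inr e.2} with hB₀
      set A₀ : Finset (M × W) :=
        insert e (A.filter fun f => f.1 ≠ e.1 ∧ f.2 ≠ e.2) with hA₀
      have heA₀ : e ∈ A₀ := Finset.mem_insert_self _ _
      have hsub : ∀ f ∈ A₀, f = e ∨ (f ∈ A ∧ f.1 ≠ e.1 ∧ f.2 ≠ e.2) := by
        intro f hf
        rcases Finset.mem_insert.mp hf with hf | hf
        · exact Or.inl hf
        · exact Or.inr (Finset.mem_filter.mp hf)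
      apply h
      refine ⟨B₀, ?_, ⟨Sum.inl e.1, Finset.mem_insert_self _ _⟩, A₀, ?_, ⟨?_, ?_, ?_⟩, ?_⟩
      · exact le_trans (Finset.card_insert_le _ _) (by simp)
      · -- OneToOne A₀
        intro f hf g hg hfg
        rcases hsub f hf with hf | hf <;> rcases hsub g hg with hg | hg
        · rw [hf, hg]
        · exfalso; subst hf; rcases hfg with h1 | h1
          · exact hg.2.1 h1.symm
          · exact hg.2.2 h1.symm
        · exfalso; subst hg; rcases hfg with h1 | h1
          · exact hf.2.1 h1
          · exact hf.2.2 h1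
        · exact hA f hf.1 g hg.1 hfg
      · -- Deviation cond 1
        intro f hf1 hf2
        have h1 : f.1 ≠ e.1 := by
          intro hc; exact hf1 (by simp [hB₀, hc])
        have h2 : f.2 ≠ e.2 := by
          intro hc; exact hf2 (by simp [hB₀, hc])
        constructor
        · intro hf
          rcases hsub f hf with hf | hf
          · exact absurd (congrArg Prod.fst hf) h1
          · exact hf.1
        · intro hf
          exact Finset.mem_insert_of_mem (Finset.mem_filter.mpr ⟨hf, h1, h2⟩)
      · -- Deviation cond 2
        intro f hf hfA
        rcases hsub f hf with hf | hf
        · subst hf; simp [hB₀]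
        · exact absurd hf.1 hfA
      · -- Deviation cond 3
        intro w hw
        refine ⟨e, Finset.mem_union.mpr (Or.inl (Finset.mem_sdiff.mpr ⟨heA₀, hnew.2⟩)), ?_⟩
        rcases Finset.mem_insert.mp hw with hw | hw
        · exact Or.inl hw
        · exact Or.inr (Finset.mem_singleton.mp hw)
      · -- every member improves
        intro w hw
        have hwB : w ∈ B := by
          rcases Finset.mem_insert.mp hw with hw | hw
          · exact hw ▸ heB1
          · exact (Finset.mem_singleton.mp hw) ▸ heB2
        obtain ⟨A'', h11, hre, hlt⟩ := hmem w hwB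
        refine ⟨A'', h11, ?_, hlt⟩
        intro f hf1 hf2
        have hf1' : f.1 = e.1 := by
          rcases Finset.mem_insert.mp hf1 with hc | hc
          · exact Sum.inl.inj hc
          · exact absurd (Finset.mem_singleton.mp hc) (by simp)
        have hf2' : f.2 = e.2 := by
          rcases Finset.mem_insert.mp hf2 with hc | hc
          · exact absurd hc (by simp)
          · exact Sum.inr.inj (Finset.mem_singleton.mp hc)
        have hfe : f = e := Prod.ext hf1' hf2'
        subst hfe
        have : f ∈ A'' ↔ f ∈ A' := hre f heB1 heB2
        simp [this, hnew.1, heA₀]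
    · -- Case: z severs a match e ∈ A \ A'. Use the singleton {z}.
      rw [Finset.mem_sdiff] at hsev
      set B₀ : Finset (M ⊕ W) := {z} with hB₀
      set A₀ : Finset (M × W) := A.filter (fun f => ¬ incident z f) with hA₀
      have hvac : ∀ (A₂ : Finset (M × W)), Reaction A₀ B₀ A₂ := by
        intro A₂ f hf1 hf2
        exfalso
        have h1 : z = Sum.inl f.1 := (Finset.mem_singleton.mp hf1).symm
        have h2 : z = Sum.inr f.2 := (Finset.mem_singleton.mp hf2).symm
        rw [h1] at h2; exact Sum.inl_ne_inr h2
      apply h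
      refine ⟨B₀, by simp [hB₀], ⟨z, Finset.mem_singleton_self _⟩, A₀, ?_, ⟨?_, ?_, ?_⟩, ?_⟩
      · intro f hf g hg hfg
        exact hA f (Finset.mem_filter.mp hf).1 g (Finset.mem_filter.mp hg).1 hfg
      · intro f hf1 hf2
        have hni : ¬ incident z f := by
          intro hi
          rcases hi with hi | hi
          · exact hf1 (by simp [hB₀, hi])
          · exact hf2 (by simp [hB₀, hi])
        constructor
        · intro hf; exact (Finset.mem_filter.mp hf).1
        · intro hf; exact Finset.mem_filter.mpr ⟨hf, hni⟩
      · intro f hf hfA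
        exact absurd (Finset.mem_filter.mp hf).1 hfA
      · intro w hw
        rw [Finset.mem_singleton] at hw
        subst hw
        refine ⟨e, Finset.mem_union.mpr (Or.inr (Finset.mem_sdiff.mpr ⟨hsev.1, ?_⟩)), hinc⟩
        intro hc
        exact (Finset.mem_filter.mp hc).2 hinc
      · intro w hw
        rw [Finset.mem_singleton] at hw
        subst hw
        obtain ⟨A'', h11, _, hlt⟩ := hmem w hz
        exact ⟨A'', h11, hvac A'', hlt⟩
  · rintro h ⟨B, _, hb⟩
    exact h ⟨B, hb⟩
end

section
/- In the matching game from the knapsack reduction—with M={x1,…,xn,m1,m2}, W={y1,…,yn,w}, nonzero values Π(x_i,y_i|m1)=-s_i, Π(x_i,y_i|m2)=v_i, Π(m1,w|m1)=-B, Π(m2,w|m2)=K-Σ_i v_i, Π(x_j,w|x_j)=-1, Π(m_i,y_j|y_j)=-1, where s_i,v_i,B,K are positive integers and Σ_i v_i ≥ K—if U'⊆{1,…,n} satisfies Σ_{i∈U'} s_i ≤ B and Σ_{i∈U'} v_i ≥ K, then the matching A consisting exactly of the matches {(x_i,y_i) : i∈U'} belongs to the neutral setwise stable set. -/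
open Finset

/-- The knapsack-reduction game: men are `Sum.inl i` (the xᵢ) and `Sum.inr b`
(b = false is m₁, b = true is m₂); women are `Sum.inl j` (the yⱼ) and `Sum.inr ()`
(the woman w).  All values not listed in the reduction are zero. -/
noncomputable def Pks (n : ℕ) (s v : Fin n → ℕ) (Bk K : ℕ) :
    (Fin n ⊕ Bool) × (Fin n ⊕ Unit) → ((Fin n ⊕ Bool) ⊕ (Fin n ⊕ Unit)) → ℝ :=
  fun e z =>
    match e, z with
    | (Sum.inl i, Sum.inl j), Sum.inl (Sum.inr b) =>
        if i = j then (if b then (v i : ℝ) else -(s i : ℝ)) else 0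
    | (Sum.inr b, Sum.inr _), Sum.inl (Sum.inr b') =>
        if b = b' then (if b then ((K : ℝ) - ∑ i, (v i : ℝ)) else -(Bk : ℝ)) else 0
    | (Sum.inl i, Sum.inr _), Sum.inl (Sum.inl j) => if i = j then -1 else 0
    | (Sum.inr _, Sum.inl j), Sum.inr (Sum.inl j') => if j = j' then -1 else 0
    | _, _ => 0


section AuxStmt13

variable (n : ℕ) (s v : Fin n → ℕ) (Bk K : ℕ)

/-- upper envelope of the value to m₂. -/
noncomputable def qv13 (n : ℕ) (v : Fin n → ℕ) : (Fin n ⊕ Bool) × (Fin n ⊕ Unit) → ℝ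
  | (Sum.inl i, Sum.inl j) => if i = j then (v i : ℝ) else 0
  | _ => 0

lemma qv13_nonneg (e : (Fin n ⊕ Bool) × (Fin n ⊕ Unit)) : 0 ≤ qv13 n v e := by
  rcases e with ⟨e1, e2⟩
  rcases e1 with i | b <;> rcases e2 with j | u <;> simp [qv13]
  split_ifs <;> positivity

lemma sum_qv13_le (S : Finset ((Fin n ⊕ Bool) × (Fin n ⊕ Unit))) :
    ∑ e ∈ S, qv13 n v e ≤ ∑ i, (v i : ℝ) := by
  classical
  set T : Finset ((Fin n ⊕ Bool) × (Fin n ⊕ Unit)) :=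
    Finset.univ.image (fun i => ((Sum.inl i : Fin n ⊕ Bool), (Sum.inl i : Fin n ⊕ Unit))) with hT
  have h0 : ∑ e ∈ S, qv13 n v e = ∑ e ∈ S ∩ T, qv13 n v e := by
    refine (Finset.sum_subset Finset.inter_subset_left ?_).symm
    intro e heS heST
    have heT : e ∉ T := fun h => heST (Finset.mem_inter.2 ⟨heS, h⟩)
    rcases e with ⟨e1, e2⟩
    rcases e1 with i | b <;> rcases e2 with j | u <;> simp [qv13]
    intro hij
    exact absurd (by simp [hT, hij] : ((Sum.inl i : Fin n ⊕ Bool), (Sum.inl j : Fin n ⊕ Unit)) ∈ T) heT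
  have h1 : ∑ e ∈ S ∩ T, qv13 n v e ≤ ∑ e ∈ T, qv13 n v e :=
    Finset.sum_le_sum_of_subset_of_nonneg Finset.inter_subset_right
      (fun e _ _ => qv13_nonneg n v e)
  have h2 : ∑ e ∈ T, qv13 n v e = ∑ i, (v i : ℝ) := by
    rw [hT, Finset.sum_image (by intro a _ b _ h; simpa using h)]
    simp [qv13]
  rw [h0]; rw [← h2]; exact h1

lemma aux13_x (S : Finset ((Fin n ⊕ Bool) × (Fin n ⊕ Unit))) (i : Fin n) :
    ∑ e ∈ S, Pks n s v Bk K e (Sum.inl (Sum.inl i)) ≤ 0 := by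
  apply Finset.sum_nonpos
  rintro ⟨e1, e2⟩ _
  rcases e1 with i' | b <;> rcases e2 with j | u <;> simp [Pks] <;> split_ifs <;> norm_num

lemma aux13_y (S : Finset ((Fin n ⊕ Bool) × (Fin n ⊕ Unit))) (j : Fin n) :
    ∑ e ∈ S, Pks n s v Bk K e (Sum.inr (Sum.inl j)) ≤ 0 := by
  apply Finset.sum_nonpos
  rintro ⟨e1, e2⟩ _
  rcases e1 with i' | b <;> rcases e2 with j' | u <;> simp [Pks] <;> split_ifs <;> norm_num

lemma aux13_y' (S : Finset ((Fin n ⊕ Bool) × (Fin n ⊕ Unit))) (j : Fin n) (b : Bool)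
    (h : ((Sum.inr b : Fin n ⊕ Bool), (Sum.inl j : Fin n ⊕ Unit)) ∈ S) :
    ∑ e ∈ S, Pks n s v Bk K e (Sum.inr (Sum.inl j)) ≤ -1 := by
  rw [← Finset.add_sum_erase _ _ h]
  have := aux13_y n s v Bk K (S.erase ((Sum.inr b : Fin n ⊕ Bool), (Sum.inl j : Fin n ⊕ Unit))) j
  have hval : Pks n s v Bk K ((Sum.inr b : Fin n ⊕ Bool), (Sum.inl j : Fin n ⊕ Unit))
      (Sum.inr (Sum.inl j)) = -1 := by simp [Pks]
  rw [hval]; linarith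

lemma aux13_w (S : Finset ((Fin n ⊕ Bool) × (Fin n ⊕ Unit))) (u : Unit) :
    ∑ e ∈ S, Pks n s v Bk K e (Sum.inr (Sum.inr u)) = 0 := by
  apply Finset.sum_eq_zero
  rintro ⟨e1, e2⟩ _
  rcases e1 with i' | b <;> rcases e2 with j' | u' <;> simp [Pks]

lemma aux13_m1 (S : Finset ((Fin n ⊕ Bool) × (Fin n ⊕ Unit))) :
    ∑ e ∈ S, Pks n s v Bk K e (Sum.inl (Sum.inr false)) ≤ 0 := by
  apply Finset.sum_nonpos
  rintro ⟨e1, e2⟩ _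
  rcases e1 with i' | b <;> rcases e2 with j' | u <;> simp [Pks] <;>
    split_ifs <;> simp_all

lemma aux13_m1' (S : Finset ((Fin n ⊕ Bool) × (Fin n ⊕ Unit)))
    (h : ((Sum.inr false : Fin n ⊕ Bool), (Sum.inr () : Fin n ⊕ Unit)) ∈ S) :
    ∑ e ∈ S, Pks n s v Bk K e (Sum.inl (Sum.inr false)) ≤ -(Bk : ℝ) := by
  rw [← Finset.add_sum_erase _ _ h]
  have := aux13_m1 n s v Bk K (S.erase ((Sum.inr false : Fin n ⊕ Bool), (Sum.inr () : Fin n ⊕ Unit)))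
  have hval : Pks n s v Bk K ((Sum.inr false : Fin n ⊕ Bool), (Sum.inr () : Fin n ⊕ Unit))
      (Sum.inl (Sum.inr false)) = -(Bk : ℝ) := by simp [Pks]
  rw [hval]; linarith

lemma aux13_m2 (hKv : K ≤ ∑ i, v i) (S : Finset ((Fin n ⊕ Bool) × (Fin n ⊕ Unit))) :
    ∑ e ∈ S, Pks n s v Bk K e (Sum.inl (Sum.inr true)) ≤ ∑ i, (v i : ℝ) := by
  have hle : ∀ e ∈ S, Pks n s v Bk K e (Sum.inl (Sum.inr true)) ≤ qv13 n v e := by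
    rintro ⟨e1, e2⟩ _
    have hKv' : (K : ℝ) ≤ ∑ i, (v i : ℝ) := by exact_mod_cast hKv
    rcases e1 with i' | b <;> rcases e2 with j' | u <;> simp [Pks, qv13] <;>
      split_ifs <;> norm_num <;> linarith
  calc ∑ e ∈ S, Pks n s v Bk K e (Sum.inl (Sum.inr true)) ≤ ∑ e ∈ S, qv13 n v e :=
        Finset.sum_le_sum hle
    _ ≤ ∑ i, (v i : ℝ) := sum_qv13_le n v S

lemma aux13_m2' (hKv : K ≤ ∑ i, v i) (S : Finset ((Fin n ⊕ Bool) × (Fin n ⊕ Unit)))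
    (h : ((Sum.inr true : Fin n ⊕ Bool), (Sum.inr () : Fin n ⊕ Unit)) ∈ S) :
    ∑ e ∈ S, Pks n s v Bk K e (Sum.inl (Sum.inr true)) ≤ (K : ℝ) := by
  rw [← Finset.add_sum_erase _ _ h]
  have := aux13_m2 n s v Bk K hKv
    (S.erase ((Sum.inr true : Fin n ⊕ Bool), (Sum.inr () : Fin n ⊕ Unit)))
  have hval : Pks n s v Bk K ((Sum.inr true : Fin n ⊕ Bool), (Sum.inr () : Fin n ⊕ Unit))
      (Sum.inl (Sum.inr true)) = (K : ℝ) - ∑ i, (v i : ℝ) := by simp [Pks]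
  rw [hval]; linarith

end AuxStmt13

/-- In the knapsack-reduction game, if `U'` is a solution of the knapsack instance,
then the matching consisting exactly of the matches (xᵢ,yᵢ) for i ∈ U' belongs to the
neutral setwise stable set. -/
theorem stmt13 (n : ℕ) (s v : Fin n → ℕ) (Bk K : ℕ)
    (hs : ∀ i, 0 < s i) (hv : ∀ i, 0 < v i) (hB : 0 < Bk) (hK : 0 < K)
    (hKv : K ≤ ∑ i, v i)
    (U' : Finset (Fin n))
    (h1 : ∑ i ∈ U', s i ≤ Bk) (h2 : K ≤ ∑ i ∈ U', v i) :
    NeutralStable (Pks n s v Bk K)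
      (U'.image (fun i => ((Sum.inl i : Fin n ⊕ Bool), (Sum.inl i : Fin n ⊕ Unit)))) := by
  classical
  set A : Finset ((Fin n ⊕ Bool) × (Fin n ⊕ Unit)) :=
    U'.image (fun i => ((Sum.inl i : Fin n ⊕ Bool), (Sum.inl i : Fin n ⊕ Unit))) with hA
  set P := Pks n s v Bk K with hP
  rintro ⟨B, A', ⟨hout, hnew, hpart⟩, hweak, z, hzB, hz⟩
  have hinj : ∀ a ∈ U', ∀ b ∈ U',
      (fun i => ((Sum.inl i : Fin n ⊕ Bool), (Sum.inl i : Fin n ⊕ Unit))) a =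
      (fun i => ((Sum.inl i : Fin n ⊕ Bool), (Sum.inl i : Fin n ⊕ Unit))) b → a = b := by
    intro a _ b _ h; simpa using h
  -- matches in A are diagonal x-y matches
  have hAnoty : ∀ (b : Bool) (j : Fin n),
      ((Sum.inr b : Fin n ⊕ Bool), (Sum.inl j : Fin n ⊕ Unit)) ∉ A := by
    intro b j h; simp [hA] at h
  have hAnotw : ∀ (b : Bool),
      ((Sum.inr b : Fin n ⊕ Bool), (Sum.inr () : Fin n ⊕ Unit)) ∉ A := by
    intro b h; simp [hA] at h
  -- utilities in A
  have huy : ∀ j : Fin n, utility P A (Sum.inr (Sum.inl j)) = 0 := by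
    intro j
    apply Finset.sum_eq_zero
    intro e he
    rw [hA] at he
    obtain ⟨i, _, rfl⟩ := Finset.mem_image.1 he
    simp [hP, Pks]
  have hux : ∀ i : Fin n, utility P A (Sum.inl (Sum.inl i)) = 0 := by
    intro i
    apply Finset.sum_eq_zero
    intro e he
    rw [hA] at he
    obtain ⟨k, _, rfl⟩ := Finset.mem_image.1 he
    simp [hP, Pks]
  have hum1 : utility P A (Sum.inl (Sum.inr false)) = -∑ i ∈ U', (s i : ℝ) := by
    rw [utility, hA, Finset.sum_image hinj, ← Finset.sum_neg_distrib]
    apply Finset.sum_congr rfl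
    intro i _
    simp [hP, Pks]
  have hum2 : utility P A (Sum.inl (Sum.inr true)) = ∑ i ∈ U', (v i : ℝ) := by
    rw [utility, hA, Finset.sum_image hinj]
    apply Finset.sum_congr rfl
    intro i _
    simp [hP, Pks]
  -- no man-to-y match can appear in A'
  have hC1 : ∀ (b : Bool) (j : Fin n),
      ((Sum.inr b : Fin n ⊕ Bool), (Sum.inl j : Fin n ⊕ Unit)) ∉ A' := by
    intro b j hmem
    have hB' := (hnew _ hmem (hAnoty b j)).2
    have hw := hweak _ hB'
    have h0 := huy j
    have h1' := aux13_y' n s v Bk K A' j b hmem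
    rw [h0] at hw
    have : utility P A' (Sum.inr (Sum.inl j)) ≤ -1 := h1'
    linarith
  -- case analysis on the strict improver
  rcases z with zi | zj
  · rcases zi with i | b
    · -- z = x_i
      have h0 := hux i
      have h1' := aux13_x n s v Bk K A' i
      rw [h0] at hz
      exact absurd hz (not_lt.2 h1')
    · -- z = m_b : find the changed match incident to it
      obtain ⟨e, he, hinc⟩ := hpart _ hzB
      rcases e with ⟨e1, e2⟩
      rcases hinc with h | h
      · simp only [Sum.inl.injEq] at h
        subst h
        rcases e2 with j | u
        · -- e = (m_b, y_j) : impossible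
          rcases Finset.mem_union.1 he with h' | h'
          · exact absurd (Finset.mem_sdiff.1 h').1 (hC1 b j)
          · exact absurd (Finset.mem_sdiff.1 h').1 (hAnoty b j)
        · -- e = (m_b, w)
          cases u
          have heA' : ((Sum.inr b : Fin n ⊕ Bool), (Sum.inr () : Fin n ⊕ Unit)) ∈ A' := by
            rcases Finset.mem_union.1 he with h' | h'
            · exact (Finset.mem_sdiff.1 h').1
            · exact absurd (Finset.mem_sdiff.1 h').1 (hAnotw b)
          cases b
          · -- m₁
            have h1' := aux13_m1' n s v Bk K A' heA'
            have hcast : (∑ i ∈ U', (s i : ℝ)) ≤ (Bk : ℝ) := by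
              exact_mod_cast h1
            rw [hum1] at hz
            have : utility P A' (Sum.inl (Sum.inr false)) ≤ -(Bk : ℝ) := h1'
            linarith
          · -- m₂
            have h1' := aux13_m2' n s v Bk K hKv A' heA'
            have hcast : (K : ℝ) ≤ ∑ i ∈ U', (v i : ℝ) := by
              exact_mod_cast h2
            rw [hum2] at hz
            have : utility P A' (Sum.inl (Sum.inr true)) ≤ (K : ℝ) := h1'
            linarith
      · exact absurd h (by simp)
  · rcases zj with j | u
    · -- z = y_j
      have h0 := huy j
      have h1' := aux13_y n s v Bk K A' j
      rw [h0] at hz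
      exact absurd hz (not_lt.2 h1')
    · -- z = w
      cases u
      have h0 := aux13_w n s v Bk K A ()
      have h1' := aux13_w n s v Bk K A' ()
      rw [utility, utility] at hz
      rw [h0, h1'] at hz
      exact lt_irrefl _ hz
end

section
/- In the matching game from the knapsack reduction above, if the neutral setwise stable set is nonempty, then there exists U'⊆{1,…,n} with Σ_{i∈U'} s_i ≤ B and Σ_{i∈U'} v_i ≥ K. -/
open Finset

section Helpers

variable (n : ℕ) (s v : Fin n → ℕ) (Bk K : ℕ)

lemma Pks_w (e : (Fin n ⊕ Bool) × (Fin n ⊕ Unit)) :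
    Pks n s v Bk K e (Sum.inr (Sum.inr ())) = 0 := by
  obtain ⟨a, b⟩ := e
  rcases a with i | bb <;> rcases b with j | u <;> rfl

lemma Pks_x (e : (Fin n ⊕ Bool) × (Fin n ⊕ Unit)) (k : Fin n) :
    Pks n s v Bk K e (Sum.inl (Sum.inl k)) =
      if e = (Sum.inl k, Sum.inr ()) then -1 else 0 := by
  obtain ⟨a, b⟩ := e
  rcases a with i | bb <;> rcases b with j | u <;> simp [Pks, Prod.ext_iff, eq_comm]

lemma Pks_y (e : (Fin n ⊕ Bool) × (Fin n ⊕ Unit)) (k : Fin n) :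
    Pks n s v Bk K e (Sum.inr (Sum.inl k)) =
      if ∃ bb : Bool, e = (Sum.inr bb, Sum.inl k) then -1 else 0 := by
  obtain ⟨a, b⟩ := e
  rcases a with i | bb <;> rcases b with j | u <;> simp [Pks, Prod.ext_iff, eq_comm]

end Helpers

section Helpers2

variable (n : ℕ) (s v : Fin n → ℕ) (Bk K : ℕ)

lemma Pks_m1_diag (i : Fin n) :
    Pks n s v Bk K (Sum.inl i, Sum.inl i) (Sum.inl (Sum.inr false)) = -(s i : ℝ) := by
  simp [Pks]

lemma Pks_m2_diag (i : Fin n) :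
    Pks n s v Bk K (Sum.inl i, Sum.inl i) (Sum.inl (Sum.inr true)) = (v i : ℝ) := by
  simp [Pks]

lemma Pks_m1_mw :
    Pks n s v Bk K (Sum.inr false, Sum.inr ()) (Sum.inl (Sum.inr false)) = -(Bk : ℝ) := by
  simp [Pks]

lemma Pks_m2_mw :
    Pks n s v Bk K (Sum.inr true, Sum.inr ()) (Sum.inl (Sum.inr true)) = (K : ℝ) - ∑ i, (v i : ℝ) := by
  simp [Pks]

lemma sum_m1 (S : Finset ((Fin n ⊕ Bool) × (Fin n ⊕ Unit)))
    (hS : ∀ e ∈ S, (∃ i j, e = (Sum.inl i, Sum.inl j)) ∨ e = (Sum.inr true, Sum.inr ())) :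
    ∑ e ∈ S, Pks n s v Bk K e (Sum.inl (Sum.inr false)) =
      -∑ i ∈ univ.filter (fun i => (Sum.inl i, Sum.inl i) ∈ S), (s i : ℝ) := by
  classical
  rw [← Finset.sum_filter_add_sum_filter_not S
    (fun e => ∃ i : Fin n, e = (Sum.inl i, Sum.inl i))]
  have h2 : ∑ e ∈ S.filter (fun e => ¬∃ i : Fin n, e = (Sum.inl i, Sum.inl i)),
      Pks n s v Bk K e (Sum.inl (Sum.inr false)) = 0 := by
    apply Finset.sum_eq_zero
    intro e he
    rw [Finset.mem_filter] at he
    rcases hS e he.1 with ⟨i, j, rfl⟩ | rfl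
    · have hij : i ≠ j := by rintro rfl; exact he.2 ⟨i, rfl⟩
      simp [Pks, hij]
    · rfl
  rw [h2, add_zero]
  have h3 : S.filter (fun e => ∃ i : Fin n, e = (Sum.inl i, Sum.inl i)) =
      (univ.filter (fun i => (Sum.inl i, Sum.inl i) ∈ S)).image
        (fun i : Fin n => ((Sum.inl i, Sum.inl i) : (Fin n ⊕ Bool) × (Fin n ⊕ Unit))) := by
    ext e
    simp only [Finset.mem_filter, Finset.mem_image, Finset.mem_univ, true_and]
    constructor
    · rintro ⟨heS, i, rfl⟩; exact ⟨i, heS, rfl⟩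
    · rintro ⟨i, hi, rfl⟩; exact ⟨hi, i, rfl⟩
  rw [h3, Finset.sum_image (by intro a _ b _ h; simpa using h), ← Finset.sum_neg_distrib]
  exact Finset.sum_congr rfl fun i _ => by simp [Pks]

lemma sum_m2 (S : Finset ((Fin n ⊕ Bool) × (Fin n ⊕ Unit)))
    (hS : ∀ e ∈ S, ∃ i j, e = (Sum.inl i, Sum.inl j)) :
    ∑ e ∈ S, Pks n s v Bk K e (Sum.inl (Sum.inr true)) =
      ∑ i ∈ univ.filter (fun i => (Sum.inl i, Sum.inl i) ∈ S), (v i : ℝ) := by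
  classical
  rw [← Finset.sum_filter_add_sum_filter_not S
    (fun e => ∃ i : Fin n, e = (Sum.inl i, Sum.inl i))]
  have h2 : ∑ e ∈ S.filter (fun e => ¬∃ i : Fin n, e = (Sum.inl i, Sum.inl i)),
      Pks n s v Bk K e (Sum.inl (Sum.inr true)) = 0 := by
    apply Finset.sum_eq_zero
    intro e he
    rw [Finset.mem_filter] at he
    obtain ⟨i, j, rfl⟩ := hS e he.1
    have hij : i ≠ j := by rintro rfl; exact he.2 ⟨i, rfl⟩
    simp [Pks, hij]
  rw [h2, add_zero]
  have h3 : S.filter (fun e => ∃ i : Fin n, e = (Sum.inl i, Sum.inl i)) =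
      (univ.filter (fun i => (Sum.inl i, Sum.inl i) ∈ S)).image
        (fun i : Fin n => ((Sum.inl i, Sum.inl i) : (Fin n ⊕ Bool) × (Fin n ⊕ Unit))) := by
    ext e
    simp only [Finset.mem_filter, Finset.mem_image, Finset.mem_univ, true_and]
    constructor
    · rintro ⟨heS, i, rfl⟩; exact ⟨i, heS, rfl⟩
    · rintro ⟨i, hi, rfl⟩; exact ⟨hi, i, rfl⟩
  rw [h3, Finset.sum_image (by intro a _ b _ h; simpa using h)]
  exact Finset.sum_congr rfl fun i _ => by simp [Pks]

lemma utility_x (A : Finset ((Fin n ⊕ Bool) × (Fin n ⊕ Unit))) (k : Fin n)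
    (h : (Sum.inl k, Sum.inr ()) ∉ A) :
    utility (Pks n s v Bk K) A (Sum.inl (Sum.inl k)) = 0 :=
  Finset.sum_eq_zero fun e he => by
    rw [Pks_x, if_neg]; rintro rfl; exact h he

lemma utility_y (A : Finset ((Fin n ⊕ Bool) × (Fin n ⊕ Unit))) (k : Fin n)
    (h : ∀ bb : Bool, (Sum.inr bb, Sum.inl k) ∉ A) :
    utility (Pks n s v Bk K) A (Sum.inr (Sum.inl k)) = 0 :=
  Finset.sum_eq_zero fun e he => by
    rw [Pks_y, if_neg]; rintro ⟨bb, rfl⟩; exact h bb he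

lemma utility_w (A : Finset ((Fin n ⊕ Bool) × (Fin n ⊕ Unit))) :
    utility (Pks n s v Bk K) A (Sum.inr (Sum.inr ())) = 0 :=
  Finset.sum_eq_zero fun e _ => Pks_w n s v Bk K e

end Helpers2

section Helpers3

variable {M W : Type*} [DecidableEq M] [DecidableEq W]

lemma erase_block (P : M × W → M ⊕ W → ℝ) (A : Finset (M × W)) (hA : NeutralStable P A)
    (e₀ : M × W) (he : e₀ ∈ A) (z : M ⊕ W) (hz : incident z e₀) (hneg : P e₀ z < 0) :
    False := by
  classical
  apply hA
  have hne : e₀ ∉ A.erase e₀ := Finset.notMem_erase _ _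
  have hkey : ∀ z' : M ⊕ W, utility P A z' = P e₀ z' + utility P (A.erase e₀) z' := by
    intro z'
    rw [utility, utility, ← Finset.add_sum_erase A _ he]
  refine ⟨{z}, A.erase e₀, ⟨?_, ?_, ?_⟩, ?_, ?_⟩
  · intro e h1 h2
    have hee : e ≠ e₀ := by
      rintro rfl
      rcases hz with h | h
      · exact h1 (by rw [← h]; exact Finset.mem_singleton_self z)
      · exact h2 (by rw [← h]; exact Finset.mem_singleton_self z)
    simp [Finset.mem_erase, hee]
  · intro e he' he''
    exact absurd (Finset.mem_of_mem_erase he') he''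
  · intro z' hz'
    rw [Finset.mem_singleton] at hz'
    subst hz'
    exact ⟨e₀, Finset.mem_union_right _ (Finset.mem_sdiff.2 ⟨he, hne⟩), hz⟩
  · intro z' hz'
    rw [Finset.mem_singleton] at hz'
    subst hz'
    rw [hkey]
    linarith
  · refine ⟨z, Finset.mem_singleton_self z, ?_⟩
    rw [hkey]
    linarith

end Helpers3

/-- In the knapsack-reduction game, if the neutral setwise stable set is nonempty, then
the knapsack instance has a solution. -/
theorem stmt14 (n : ℕ) (s v : Fin n → ℕ) (Bk K : ℕ)
    (hs : ∀ i, 0 < s i) (hv : ∀ i, 0 < v i) (hB : 0 < Bk) (hK : 0 < K)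
    (hKv : K ≤ ∑ i, v i)
    (hne : ∃ A, NeutralStable (Pks n s v Bk K) A) :
    ∃ U' : Finset (Fin n), (∑ i ∈ U', s i ≤ Bk) ∧ (K ≤ ∑ i ∈ U', v i) := by
  classical
  obtain ⟨A, hA⟩ := hne
  have hxw : ∀ (i : Fin n) (u : Unit), ((Sum.inl i, Sum.inr u) : (Fin n ⊕ Bool) × (Fin n ⊕ Unit)) ∉ A := by
    intro i u hmem
    cases u
    exact erase_block _ A hA _ hmem (Sum.inl (Sum.inl i)) (Or.inl rfl)
      (by rw [Pks_x]; norm_num)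
  have hby : ∀ (bb : Bool) (j : Fin n), ((Sum.inr bb, Sum.inl j) : (Fin n ⊕ Bool) × (Fin n ⊕ Unit)) ∉ A := by
    intro bb j hmem
    refine erase_block _ A hA _ hmem (Sum.inr (Sum.inl j)) (Or.inr rfl) ?_
    rw [Pks_y, if_pos ⟨bb, rfl⟩]; norm_num
  have hm1 : ((Sum.inr false, Sum.inr ()) : (Fin n ⊕ Bool) × (Fin n ⊕ Unit)) ∉ A := by
    intro hmem
    refine erase_block _ A hA _ hmem (Sum.inl (Sum.inr false)) (Or.inl rfl) ?_
    rw [Pks_m1_mw]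
    simpa using hB
  have hstruct : ∀ e ∈ A, (∃ i j : Fin n, e = (Sum.inl i, Sum.inl j)) ∨
      e = (Sum.inr true, Sum.inr ()) := by
    rintro ⟨a, b⟩ hmem
    rcases a with i | bb
    · rcases b with j | u
      · exact Or.inl ⟨i, j, rfl⟩
      · cases u; exact absurd hmem (hxw i ())
    · rcases b with j | u
      · exact absurd hmem (hby bb j)
      · cases u; cases bb
        · exact absurd hmem hm1
        · exact Or.inr rfl
  refine ⟨univ.filter (fun i : Fin n => (Sum.inl i, Sum.inl i) ∈ A), ?_, ?_⟩
  · -- weight inequality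
    by_contra hcon
    push_neg at hcon
    exfalso
    apply hA
    set U' := univ.filter (fun i : Fin n => ((Sum.inl i, Sum.inl i) : (Fin n ⊕ Bool) × (Fin n ⊕ Unit)) ∈ A) with hU'def
    set A' : Finset ((Fin n ⊕ Bool) × (Fin n ⊕ Unit)) := insert (Sum.inr false, Sum.inr ())
      (A.filter (fun e => ∀ i : Fin n, e ≠ (Sum.inl i, Sum.inl i))) with hA'def
    set Bc : Finset ((Fin n ⊕ Bool) ⊕ (Fin n ⊕ Unit)) := insert (Sum.inl (Sum.inr false))
      (insert (Sum.inr (Sum.inr ()))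
        ((U'.image fun i => Sum.inl (Sum.inl i)) ∪ (U'.image fun i => Sum.inr (Sum.inl i)))) with hBcdef
    have hmemA' : ∀ e, e ∈ A' ↔ e = ((Sum.inr false, Sum.inr ()) : (Fin n ⊕ Bool) × (Fin n ⊕ Unit)) ∨
        (e ∈ A ∧ ∀ i : Fin n, e ≠ (Sum.inl i, Sum.inl i)) := by
      intro e
      simp [hA'def, and_comm]
    have hmemBc : ∀ z, z ∈ Bc ↔ z = Sum.inl (Sum.inr false) ∨ z = Sum.inr (Sum.inr ()) ∨
        (∃ i ∈ U', Sum.inl (Sum.inl i) = z) ∨ (∃ i ∈ U', Sum.inr (Sum.inl i) = z) := by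
      intro z
      simp [hBcdef]
    have hmemU : ∀ i : Fin n, i ∈ U' ↔ ((Sum.inl i, Sum.inl i) : (Fin n ⊕ Bool) × (Fin n ⊕ Unit)) ∈ A := by
      intro i; rw [hU'def]; simp
    have hmwA' : ((Sum.inr false, Sum.inr ()) : (Fin n ⊕ Bool) × (Fin n ⊕ Unit)) ∈ A' :=
      (hmemA' _).2 (Or.inl rfl)
    have hm1Bc : Sum.inl (Sum.inr false) ∈ Bc := (hmemBc _).2 (Or.inl rfl)
    -- utility computations
    have uAm1 : utility (Pks n s v Bk K) A (Sum.inl (Sum.inr false)) = -∑ i ∈ U', (s i : ℝ) := by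
      rw [utility, sum_m1 n s v Bk K A hstruct]
    have uA'm1 : utility (Pks n s v Bk K) A' (Sum.inl (Sum.inr false)) = -(Bk : ℝ) := by
      rw [utility, hA'def, Finset.sum_insert (by simp [hm1]), Pks_m1_mw]
      have : ∑ e ∈ A.filter (fun e => ∀ i : Fin n, e ≠ (Sum.inl i, Sum.inl i)),
          Pks n s v Bk K e (Sum.inl (Sum.inr false)) = 0 := by
        apply Finset.sum_eq_zero
        intro e he
        rw [Finset.mem_filter] at he
        rcases hstruct e he.1 with ⟨i, j, rfl⟩ | rfl
        · have hij : i ≠ j := by rintro rfl; exact he.2 i rfl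
          simp [Pks, hij]
        · simp [Pks]
      rw [this, add_zero]
    have hlt : utility (Pks n s v Bk K) A (Sum.inl (Sum.inr false)) <
        utility (Pks n s v Bk K) A' (Sum.inl (Sum.inr false)) := by
      rw [uAm1, uA'm1]
      have h1 : (Bk : ℝ) < ∑ i ∈ U', (s i : ℝ) := by
        exact_mod_cast hcon
      linarith
    have hweak : ∀ z ∈ Bc, utility (Pks n s v Bk K) A z ≤ utility (Pks n s v Bk K) A' z := by
      intro z hz
      rcases (hmemBc z).1 hz with rfl | rfl | ⟨i, hi, rfl⟩ | ⟨i, hi, rfl⟩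
      · exact le_of_lt hlt
      · rw [utility_w, utility_w]
      · rw [utility_x n s v Bk K A i (hxw i ()), utility_x n s v Bk K A' i ?_]
        intro h
        rcases (hmemA' _).1 h with h | ⟨h, -⟩
        · exact absurd h (by simp)
        · exact hxw i () h
      · rw [utility_y n s v Bk K A i (hby · i), utility_y n s v Bk K A' i ?_]
        intro bb h
        rcases (hmemA' _).1 h with h | ⟨h, -⟩
        · exact absurd h (by simp)
        · exact hby bb i h
    refine ⟨Bc, A', ⟨?_, ?_, ?_⟩, hweak, ⟨Sum.inl (Sum.inr false), hm1Bc, hlt⟩⟩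
    · -- unchanged outside
      intro e h1 h2
      have he1 : e ≠ (Sum.inr false, Sum.inr ()) := by
        rintro rfl
        exact h2 ((hmemBc _).2 (Or.inr (Or.inl rfl)))
      rw [hmemA']
      constructor
      · rintro (h | ⟨h, -⟩)
        · exact absurd h he1
        · exact h
      · intro h
        refine Or.inr ⟨h, ?_⟩
        rintro i rfl
        exact h1 ((hmemBc _).2 (Or.inr (Or.inr (Or.inl ⟨i, (hmemU i).2 h, rfl⟩))))
    · -- new matches within Bc
      intro e he' heA
      rcases (hmemA' _).1 he' with rfl | ⟨h, -⟩
      · exact ⟨(hmemBc _).2 (Or.inl rfl), (hmemBc _).2 (Or.inr (Or.inl rfl))⟩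
      · exact absurd h heA
    · -- everyone moves
      intro z hz
      rcases (hmemBc z).1 hz with rfl | rfl | ⟨i, hi, rfl⟩ | ⟨i, hi, rfl⟩
      · exact ⟨(Sum.inr false, Sum.inr ()), Finset.mem_union_left _
          (Finset.mem_sdiff.2 ⟨hmwA', hm1⟩), Or.inl rfl⟩
      · exact ⟨(Sum.inr false, Sum.inr ()), Finset.mem_union_left _
          (Finset.mem_sdiff.2 ⟨hmwA', hm1⟩), Or.inr rfl⟩
      · refine ⟨(Sum.inl i, Sum.inl i), Finset.mem_union_right _
          (Finset.mem_sdiff.2 ⟨(hmemU i).1 hi, ?_⟩), Or.inl rfl⟩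
        intro h
        rcases (hmemA' _).1 h with h | ⟨-, h⟩
        · exact absurd h (by simp)
        · exact h i rfl
      · refine ⟨(Sum.inl i, Sum.inl i), Finset.mem_union_right _
          (Finset.mem_sdiff.2 ⟨(hmemU i).1 hi, ?_⟩), Or.inr rfl⟩
        intro h
        rcases (hmemA' _).1 h with h | ⟨-, h⟩
        · exact absurd h (by simp)
        · exact h i rfl
  · -- value inequality
    by_cases hUuniv : (univ.filter (fun i : Fin n => ((Sum.inl i, Sum.inl i) : (Fin n ⊕ Bool) × (Fin n ⊕ Unit)) ∈ A)) = univ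
    · rw [hUuniv]; exact hKv
    · have hex : ∃ i₀ : Fin n, i₀ ∉ univ.filter (fun i : Fin n => ((Sum.inl i, Sum.inl i) : (Fin n ⊕ Bool) × (Fin n ⊕ Unit)) ∈ A) := by
        by_contra h
        push_neg at h
        exact hUuniv (Finset.eq_univ_iff_forall.2 h)
      obtain ⟨i₀, hi₀⟩ := hex
      have hi₀A : ((Sum.inl i₀, Sum.inl i₀) : (Fin n ⊕ Bool) × (Fin n ⊕ Unit)) ∉ A := by
        intro h
        exact hi₀ (Finset.mem_filter.2 ⟨Finset.mem_univ _, h⟩)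
      by_cases hm2 : ((Sum.inr true, Sum.inr ()) : (Fin n ⊕ Bool) × (Fin n ⊕ Unit)) ∈ A
      · -- (m2, w) matched: blocking regardless, contradiction
        exfalso
        apply hA
        set A' : Finset ((Fin n ⊕ Bool) × (Fin n ⊕ Unit)) :=
          insert (Sum.inl i₀, Sum.inl i₀) (A.erase (Sum.inr true, Sum.inr ())) with hA'def
        set Bc : Finset ((Fin n ⊕ Bool) ⊕ (Fin n ⊕ Unit)) :=
          {Sum.inl (Sum.inr true), Sum.inr (Sum.inr ()), Sum.inl (Sum.inl i₀), Sum.inr (Sum.inl i₀)} with hBcdef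
        have hmemA' : ∀ e, e ∈ A' ↔ e = ((Sum.inl i₀, Sum.inl i₀) : (Fin n ⊕ Bool) × (Fin n ⊕ Unit)) ∨
            (e ≠ (Sum.inr true, Sum.inr ()) ∧ e ∈ A) := by
          intro e; simp [hA'def]
        have hmemBc : ∀ z, z ∈ Bc ↔ z = Sum.inl (Sum.inr true) ∨ z = Sum.inr (Sum.inr ()) ∨
            z = Sum.inl (Sum.inl i₀) ∨ z = Sum.inr (Sum.inl i₀) := by
          intro z; simp [hBcdef]
        have hpure : ∀ e ∈ A.erase ((Sum.inr true, Sum.inr ()) : (Fin n ⊕ Bool) × (Fin n ⊕ Unit)),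
            ∃ i j : Fin n, e = (Sum.inl i, Sum.inl j) := by
          intro e he
          rw [Finset.mem_erase] at he
          rcases hstruct e he.2 with h | rfl
          · exact h
          · exact absurd rfl he.1
        have hDer : univ.filter (fun i : Fin n => ((Sum.inl i, Sum.inl i) : (Fin n ⊕ Bool) × (Fin n ⊕ Unit)) ∈ A.erase (Sum.inr true, Sum.inr ())) =
            univ.filter (fun i : Fin n => ((Sum.inl i, Sum.inl i) : (Fin n ⊕ Bool) × (Fin n ⊕ Unit)) ∈ A) := by
          apply Finset.filter_congr
          intro i _
          simp [Finset.mem_erase]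
        have hd0 : ((Sum.inl i₀, Sum.inl i₀) : (Fin n ⊕ Bool) × (Fin n ⊕ Unit)) ∉
            A.erase (Sum.inr true, Sum.inr ()) := fun h => hi₀A (Finset.mem_of_mem_erase h)
        have uAm2 : utility (Pks n s v Bk K) A (Sum.inl (Sum.inr true)) =
            ((K : ℝ) - ∑ i, (v i : ℝ)) +
              ∑ i ∈ univ.filter (fun i : Fin n => ((Sum.inl i, Sum.inl i) : (Fin n ⊕ Bool) × (Fin n ⊕ Unit)) ∈ A), (v i : ℝ) := by
          rw [utility, ← Finset.add_sum_erase A _ hm2, Pks_m2_mw,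
            sum_m2 n s v Bk K _ hpure, hDer]
        have uA'm2 : utility (Pks n s v Bk K) A' (Sum.inl (Sum.inr true)) =
            (v i₀ : ℝ) +
              ∑ i ∈ univ.filter (fun i : Fin n => ((Sum.inl i, Sum.inl i) : (Fin n ⊕ Bool) × (Fin n ⊕ Unit)) ∈ A), (v i : ℝ) := by
          rw [utility, hA'def, Finset.sum_insert hd0, Pks_m2_diag,
            sum_m2 n s v Bk K _ hpure, hDer]
        have hlt : utility (Pks n s v Bk K) A (Sum.inl (Sum.inr true)) <
            utility (Pks n s v Bk K) A' (Sum.inl (Sum.inr true)) := by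
          rw [uAm2, uA'm2]
          have h1 : (K : ℝ) ≤ ∑ i, (v i : ℝ) := by exact_mod_cast hKv
          have h2 : (0 : ℝ) < v i₀ := by exact_mod_cast hv i₀
          linarith
        have hmwA' : ((Sum.inr true, Sum.inr ()) : (Fin n ⊕ Bool) × (Fin n ⊕ Unit)) ∉ A' := by
          intro h
          rcases (hmemA' _).1 h with h | ⟨h, -⟩
          · exact absurd h (by simp)
          · exact h rfl
        have hdA' : ((Sum.inl i₀, Sum.inl i₀) : (Fin n ⊕ Bool) × (Fin n ⊕ Unit)) ∈ A' :=
          (hmemA' _).2 (Or.inl rfl)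
        have hweak : ∀ z ∈ Bc, utility (Pks n s v Bk K) A z ≤ utility (Pks n s v Bk K) A' z := by
          intro z hz
          rcases (hmemBc z).1 hz with rfl | rfl | rfl | rfl
          · exact le_of_lt hlt
          · rw [utility_w, utility_w]
          · rw [utility_x n s v Bk K A i₀ (hxw i₀ ()), utility_x n s v Bk K A' i₀ ?_]
            intro h
            rcases (hmemA' _).1 h with h | ⟨-, h⟩
            · exact absurd h (by simp)
            · exact hxw i₀ () h
          · rw [utility_y n s v Bk K A i₀ (hby · i₀), utility_y n s v Bk K A' i₀ ?_]
            intro bb h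
            rcases (hmemA' _).1 h with h | ⟨-, h⟩
            · exact absurd h (by simp)
            · exact hby bb i₀ h
        refine ⟨Bc, A', ⟨?_, ?_, ?_⟩, hweak, ⟨Sum.inl (Sum.inr true), (hmemBc _).2 (Or.inl rfl), hlt⟩⟩
        · intro e h1 h2
          have he1 : e ≠ (Sum.inr true, Sum.inr ()) := by
            rintro rfl
            exact h2 ((hmemBc _).2 (Or.inr (Or.inl rfl)))
          have he2 : e ≠ (Sum.inl i₀, Sum.inl i₀) := by
            rintro rfl
            exact h1 ((hmemBc _).2 (Or.inr (Or.inr (Or.inl rfl))))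
          rw [hmemA']
          constructor
          · rintro (h | ⟨-, h⟩)
            · exact absurd h he2
            · exact h
          · intro h
            exact Or.inr ⟨he1, h⟩
        · intro e he' heA
          rcases (hmemA' _).1 he' with rfl | ⟨-, h⟩
          · exact ⟨(hmemBc _).2 (Or.inr (Or.inr (Or.inl rfl))),
              (hmemBc _).2 (Or.inr (Or.inr (Or.inr rfl)))⟩
          · exact absurd h heA
        · intro z hz
          rcases (hmemBc z).1 hz with rfl | rfl | rfl | rfl
          · exact ⟨(Sum.inr true, Sum.inr ()), Finset.mem_union_right _
              (Finset.mem_sdiff.2 ⟨hm2, hmwA'⟩), Or.inl rfl⟩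
          · exact ⟨(Sum.inr true, Sum.inr ()), Finset.mem_union_right _
              (Finset.mem_sdiff.2 ⟨hm2, hmwA'⟩), Or.inr rfl⟩
          · exact ⟨(Sum.inl i₀, Sum.inl i₀), Finset.mem_union_left _
              (Finset.mem_sdiff.2 ⟨hdA', hi₀A⟩), Or.inl rfl⟩
          · exact ⟨(Sum.inl i₀, Sum.inl i₀), Finset.mem_union_left _
              (Finset.mem_sdiff.2 ⟨hdA', hi₀A⟩), Or.inr rfl⟩
      · -- (m2, w) unmatched: form it together with all missing diagonal matches
        by_contra hcon
        push_neg at hcon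
        apply hA
        set V := univ.filter (fun i : Fin n => ((Sum.inl i, Sum.inl i) : (Fin n ⊕ Bool) × (Fin n ⊕ Unit)) ∉ A) with hVdef
        have hi₀V : i₀ ∈ V := Finset.mem_filter.2 ⟨Finset.mem_univ _, hi₀A⟩
        set A' : Finset ((Fin n ⊕ Bool) × (Fin n ⊕ Unit)) :=
          insert (Sum.inr true, Sum.inr ())
            (A ∪ V.image (fun i => ((Sum.inl i, Sum.inl i) : (Fin n ⊕ Bool) × (Fin n ⊕ Unit)))) with hA'def
        set Bc : Finset ((Fin n ⊕ Bool) ⊕ (Fin n ⊕ Unit)) := insert (Sum.inl (Sum.inr true))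
          (insert (Sum.inr (Sum.inr ()))
            ((V.image fun i => Sum.inl (Sum.inl i)) ∪ (V.image fun i => Sum.inr (Sum.inl i)))) with hBcdef
        have hmemA' : ∀ e, e ∈ A' ↔ e = ((Sum.inr true, Sum.inr ()) : (Fin n ⊕ Bool) × (Fin n ⊕ Unit)) ∨
            e ∈ A ∨ (∃ i ∈ V, ((Sum.inl i, Sum.inl i) : (Fin n ⊕ Bool) × (Fin n ⊕ Unit)) = e) := by
          intro e; simp [hA'def]
        have hmemBc : ∀ z, z ∈ Bc ↔ z = Sum.inl (Sum.inr true) ∨ z = Sum.inr (Sum.inr ()) ∨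
            (∃ i ∈ V, Sum.inl (Sum.inl i) = z) ∨ (∃ i ∈ V, Sum.inr (Sum.inl i) = z) := by
          intro z; simp [hBcdef]
        have hpureA : ∀ e ∈ A, ∃ i j : Fin n, e = (Sum.inl i, Sum.inl j) := by
          intro e he
          rcases hstruct e he with h | rfl
          · exact h
          · exact absurd he hm2
        have hpureU : ∀ e ∈ A ∪ V.image (fun i => ((Sum.inl i, Sum.inl i) : (Fin n ⊕ Bool) × (Fin n ⊕ Unit))),
            ∃ i j : Fin n, e = (Sum.inl i, Sum.inl j) := by
          intro e he
          rcases Finset.mem_union.1 he with he | he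
          · exact hpureA e he
          · obtain ⟨i, -, rfl⟩ := Finset.mem_image.1 he
            exact ⟨i, i, rfl⟩
        have hmwU : ((Sum.inr true, Sum.inr ()) : (Fin n ⊕ Bool) × (Fin n ⊕ Unit)) ∉
            A ∪ V.image (fun i => ((Sum.inl i, Sum.inl i) : (Fin n ⊕ Bool) × (Fin n ⊕ Unit))) := by
          intro h
          rcases Finset.mem_union.1 h with h | h
          · exact hm2 h
          · obtain ⟨i, -, h⟩ := Finset.mem_image.1 h
            exact absurd h (by simp)
        have hDfull : univ.filter (fun i : Fin n => ((Sum.inl i, Sum.inl i) : (Fin n ⊕ Bool) × (Fin n ⊕ Unit)) ∈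
            A ∪ V.image (fun i => ((Sum.inl i, Sum.inl i) : (Fin n ⊕ Bool) × (Fin n ⊕ Unit)))) = univ := by
          apply Finset.eq_univ_of_forall
          intro i
          refine Finset.mem_filter.2 ⟨Finset.mem_univ _, ?_⟩
          by_cases h : ((Sum.inl i, Sum.inl i) : (Fin n ⊕ Bool) × (Fin n ⊕ Unit)) ∈ A
          · exact Finset.mem_union_left _ h
          · exact Finset.mem_union_right _ (Finset.mem_image.2
              ⟨i, Finset.mem_filter.2 ⟨Finset.mem_univ _, h⟩, rfl⟩)
        have uAm2 : utility (Pks n s v Bk K) A (Sum.inl (Sum.inr true)) =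
            ∑ i ∈ univ.filter (fun i : Fin n => ((Sum.inl i, Sum.inl i) : (Fin n ⊕ Bool) × (Fin n ⊕ Unit)) ∈ A), (v i : ℝ) := by
          rw [utility, sum_m2 n s v Bk K A hpureA]
        have uA'm2 : utility (Pks n s v Bk K) A' (Sum.inl (Sum.inr true)) = (K : ℝ) := by
          rw [utility, hA'def, Finset.sum_insert hmwU, Pks_m2_mw,
            sum_m2 n s v Bk K _ hpureU, hDfull]
          simp
        have hlt : utility (Pks n s v Bk K) A (Sum.inl (Sum.inr true)) <
            utility (Pks n s v Bk K) A' (Sum.inl (Sum.inr true)) := by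
          rw [uAm2, uA'm2]
          exact_mod_cast hcon
        have hmwA : ((Sum.inr true, Sum.inr ()) : (Fin n ⊕ Bool) × (Fin n ⊕ Unit)) ∈ A' :=
          (hmemA' _).2 (Or.inl rfl)
        have hweak : ∀ z ∈ Bc, utility (Pks n s v Bk K) A z ≤ utility (Pks n s v Bk K) A' z := by
          intro z hz
          rcases (hmemBc z).1 hz with rfl | rfl | ⟨i, hi, rfl⟩ | ⟨i, hi, rfl⟩
          · exact le_of_lt hlt
          · rw [utility_w, utility_w]
          · rw [utility_x n s v Bk K A i (hxw i ()), utility_x n s v Bk K A' i ?_]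
            intro h
            rcases (hmemA' _).1 h with h | h | ⟨j, -, h⟩
            · exact absurd h (by simp)
            · exact hxw i () h
            · exact absurd h (by simp)
          · rw [utility_y n s v Bk K A i (hby · i), utility_y n s v Bk K A' i ?_]
            intro bb h
            rcases (hmemA' _).1 h with h | h | ⟨j, -, h⟩
            · exact absurd h (by simp)
            · exact hby bb i h
            · exact absurd h (by simp)
        refine ⟨Bc, A', ⟨?_, ?_, ?_⟩, hweak, ⟨Sum.inl (Sum.inr true), (hmemBc _).2 (Or.inl rfl), hlt⟩⟩
        · intro e h1 h2
          have he1 : e ≠ (Sum.inr true, Sum.inr ()) := by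
            rintro rfl
            exact h2 ((hmemBc _).2 (Or.inr (Or.inl rfl)))
          rw [hmemA']
          constructor
          · rintro (h | h | ⟨i, hi, rfl⟩)
            · exact absurd h he1
            · exact h
            · exact absurd ((hmemBc (Sum.inl (Sum.inl i))).2
                (Or.inr (Or.inr (Or.inl ⟨i, hi, rfl⟩)))) h1
          · intro h
            exact Or.inr (Or.inl h)
        · intro e he' heA
          rcases (hmemA' _).1 he' with rfl | h | ⟨i, hi, rfl⟩
          · exact ⟨(hmemBc _).2 (Or.inl rfl), (hmemBc _).2 (Or.inr (Or.inl rfl))⟩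
          · exact absurd h heA
          · exact ⟨(hmemBc _).2 (Or.inr (Or.inr (Or.inl ⟨i, hi, rfl⟩))),
              (hmemBc _).2 (Or.inr (Or.inr (Or.inr ⟨i, hi, rfl⟩)))⟩
        · intro z hz
          rcases (hmemBc z).1 hz with rfl | rfl | ⟨i, hi, rfl⟩ | ⟨i, hi, rfl⟩
          · exact ⟨(Sum.inr true, Sum.inr ()), Finset.mem_union_left _
              (Finset.mem_sdiff.2 ⟨hmwA, hm2⟩), Or.inl rfl⟩
          · exact ⟨(Sum.inr true, Sum.inr ()), Finset.mem_union_left _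
              (Finset.mem_sdiff.2 ⟨hmwA, hm2⟩), Or.inr rfl⟩
          · exact ⟨(Sum.inl i, Sum.inl i), Finset.mem_union_left _
              (Finset.mem_sdiff.2 ⟨(hmemA' _).2 (Or.inr (Or.inr ⟨i, hi, rfl⟩)),
                (Finset.mem_filter.1 hi).2⟩), Or.inl rfl⟩
          · exact ⟨(Sum.inl i, Sum.inl i), Finset.mem_union_left _
              (Finset.mem_sdiff.2 ⟨(hmemA' _).2 (Or.inr (Or.inr ⟨i, hi, rfl⟩)),
                (Finset.mem_filter.1 hi).2⟩), Or.inr rfl⟩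
end

section
/- In a many-to-many matching game with additive externalities, if a matching A admits a blocking coalition B under optimistic reasoning, then A admits a blocking singleton or a blocking pair under optimistic reasoning (i.e., optimistic setwise stability is equivalent to optimistic stability against coalitions of size at most two). -/
open Finset

/-- In many-to-many matching games, if a matching admits a blocking coalition under
optimistic reasoning, then it admits a blocking coalition of size at most two under
optimistic reasoning. -/
theorem stmt15 {M W : Type*} [DecidableEq M] [DecidableEq W]
    (P : M × W → M ⊕ W → ℝ) (A : Finset (M × W)) :
    (∃ B, OptBlocks P A B) → ∃ B, B.card ≤ 2 ∧ OptBlocks P A B := by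
  rintro ⟨B, A', ⟨hdev1, hdev2, hdev3⟩, hweak, z, hzB, A''z, hreacz, hstrict⟩
  obtain ⟨e, he, hinc⟩ := hdev3 z hzB
  rw [Finset.mem_union] at he
  rcases he with he | he
  · -- z forms a new match e ∈ A' \ A : pair {inl e.1, inr e.2} blocks
    rw [Finset.mem_sdiff] at he
    obtain ⟨heA', heA⟩ := he
    obtain ⟨h1B, h2B⟩ := hdev2 e heA' heA
    refine ⟨{Sum.inl e.1, Sum.inr e.2}, ?_, insert e A, ⟨?_, ?_, ?_⟩, ?_, ?_⟩
    · exact (Finset.card_insert_le _ _).trans (by simp)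
    · intro f hf1 hf2
      have hfe : f ≠ e := by
        intro h; subst h
        exact hf1 (by simp)
      simp [Finset.mem_insert, hfe]
    · intro f hf hfA
      rcases Finset.mem_insert.mp hf with h | h
      · subst h; simp
      · exact absurd h hfA
    · intro z' hz'
      refine ⟨e, ?_, ?_⟩
      · rw [Finset.mem_union, Finset.mem_sdiff]
        exact Or.inl ⟨Finset.mem_insert_self _ _, heA⟩
      · rcases Finset.mem_insert.mp hz' with h | h
        · exact Or.inl h
        · exact Or.inr (Finset.mem_singleton.mp h)
    · -- weak improvement for both endpoints
      intro z' hz'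
      have hz'B : z' ∈ B := by
        rcases Finset.mem_insert.mp hz' with h | h
        · subst h; exact h1B
        · rw [Finset.mem_singleton] at h; subst h; exact h2B
      obtain ⟨A'', hreac, hut⟩ := hweak z' hz'B
      refine ⟨A'', ?_, hut⟩
      intro f hf1 hf2
      have hf1' : f.1 = e.1 := by
        rcases Finset.mem_insert.mp hf1 with h | h
        · exact Sum.inl.inj h
        · exact absurd (Finset.mem_singleton.mp h) (by simp)
      have hf2' : f.2 = e.2 := by
        rcases Finset.mem_insert.mp hf2 with h | h
        · exact absurd h (by simp)
        · exact Sum.inr.inj (Finset.mem_singleton.mp h)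
      have hfe : f = e := Prod.ext hf1' hf2'
      subst hfe
      rw [hreac f h1B h2B]
      simp [heA']
    · -- strict improvement for z
      have hzmem : z ∈ ({Sum.inl e.1, Sum.inr e.2} : Finset (M ⊕ W)) := by
        rcases hinc with h | h <;> subst h <;> simp
      refine ⟨z, hzmem, A''z, ?_, hstrict⟩
      intro f hf1 hf2
      have hf1' : f.1 = e.1 := by
        rcases Finset.mem_insert.mp hf1 with h | h
        · exact Sum.inl.inj h
        · exact absurd (Finset.mem_singleton.mp h) (by simp)
      have hf2' : f.2 = e.2 := by
        rcases Finset.mem_insert.mp hf2 with h | h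
        · exact absurd h (by simp)
        · exact Sum.inr.inj (Finset.mem_singleton.mp h)
      have hfe : f = e := Prod.ext hf1' hf2'
      subst hfe
      rw [hreacz f h1B h2B]
      simp [heA']
  · -- z severs e ∈ A \ A' : singleton {z} blocks
    rw [Finset.mem_sdiff] at he
    obtain ⟨heA, heA'⟩ := he
    have hvac : ∀ (A'' : Finset (M × W)), Reaction (A.erase e) ({z} : Finset (M ⊕ W)) A'' := by
      intro A'' f hf1 hf2
      rw [Finset.mem_singleton] at hf1 hf2
      exact absurd (hf1.trans hf2.symm) (by simp)
    refine ⟨{z}, by simp, A.erase e, ⟨?_, ?_, ?_⟩, ?_, ?_⟩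
    · intro f hf1 hf2
      rw [Finset.mem_singleton] at hf1 hf2
      have hfe : f ≠ e := by
        intro h; subst h
        rcases hinc with h | h
        · exact hf1 h.symm
        · exact hf2 h.symm
      simp [Finset.mem_erase, hfe]
    · intro f hf hfA
      exact absurd (Finset.mem_of_mem_erase hf) hfA
    · intro z' hz'
      rw [Finset.mem_singleton] at hz'
      subst hz'
      refine ⟨e, ?_, hinc⟩
      rw [Finset.mem_union, Finset.mem_sdiff, Finset.mem_sdiff]
      exact Or.inr ⟨heA, by simp⟩
    · intro z' hz'
      rw [Finset.mem_singleton] at hz'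
      subst hz'
      exact ⟨A''z, hvac _, le_of_lt hstrict⟩
    · exact ⟨z, by simp, A''z, hvac _, hstrict⟩
end
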